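/- arXiv:1603.03030 — 6 statements merged into one kernel-verified Lean document; each statement's English description precedes it below -/
import Mathlib

section
/- For any nonzero vector f in C^N and any two orthonormal bases {e_i} and {u_l} of C^N with mutual coherence μ = max_{i,l} |⟨e_i, u_l⟩|, if α and β denote the coefficient vectors of f in the two bases, then (‖α‖_0 + ‖β‖_0)/2 ≥ sqrt(‖α‖_0 · ‖β‖_0) ≥ 1/μ, where ‖·‖_0 counts the number of nonzero entries. -/
open scoped Classical
open Finset

noncomputable def l0 {N : ℕ} (f : Fin N → ℂ) : ℕ :=
  (Finset.univ.filter fun i => f i ≠ 0).card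

noncomputable def ip {N : ℕ} (x y : Fin N → ℂ) : ℂ :=
  ∑ n, x n * (starRingEnd ℂ) (y n)

-- completeness from orthonormality (square matrix)
lemma complete {N : ℕ} (e : Fin N → Fin N → ℂ)
    (he : ∀ i j, ip (e i) (e j) = if i = j then 1 else 0) (n m : Fin N) :
    ∑ i, e i n * (starRingEnd ℂ) (e i m) = if n = m then 1 else 0 := by
  set E : Matrix (Fin N) (Fin N) ℂ := Matrix.of (fun i n => e i n) with hE
  have h1 : E * E.conjTranspose = 1 := by
    ext i j
    rw [Matrix.mul_apply, Matrix.one_apply]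
    simpa [hE, Matrix.conjTranspose_apply, ip] using he i j
  have h2 : E.conjTranspose * E = 1 := mul_eq_one_comm.mp h1
  have h3 : ∑ i, (starRingEnd ℂ) (e i n) * e i m = if n = m then 1 else 0 := by
    have := congrFun (congrFun h2 n) m
    rw [Matrix.mul_apply, Matrix.one_apply] at this
    simpa [hE, Matrix.conjTranspose_apply] using this
  have := congrArg (starRingEnd ℂ) h3
  rw [map_sum] at this
  simp only [map_mul, RingHom.id_apply, starRingEnd_self_apply] at this
  rw [this]
  split <;> simp

lemma sum_ip_mul_conj {N : ℕ} (e : Fin N → Fin N → ℂ)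
    (he : ∀ i j, ip (e i) (e j) = if i = j then 1 else 0) (x y : Fin N → ℂ) :
    ∑ i, ip (e i) x * (starRingEnd ℂ) (ip (e i) y) = ip y x := by
  have key := complete e he
  calc ∑ i, ip (e i) x * (starRingEnd ℂ) (ip (e i) y)
      = ∑ i, ∑ n, ∑ m, ((starRingEnd ℂ) (x n) * y m) * (e i n * (starRingEnd ℂ) (e i m)) := by
        refine Finset.sum_congr rfl fun i _ => ?_
        simp only [ip, map_sum, map_mul, starRingEnd_self_apply, Finset.sum_mul_sum]
        refine Finset.sum_congr rfl fun n _ => Finset.sum_congr rfl fun m _ => ?_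
        ring
    _ = ∑ n, ∑ m, ((starRingEnd ℂ) (x n) * y m) * ∑ i, (e i n * (starRingEnd ℂ) (e i m)) := by
        rw [Finset.sum_comm]
        refine Finset.sum_congr rfl fun n _ => ?_
        rw [Finset.sum_comm]
        refine Finset.sum_congr rfl fun m _ => ?_
        rw [← Finset.mul_sum]
    _ = ∑ n, (starRingEnd ℂ) (x n) * y n := by
        refine Finset.sum_congr rfl fun n _ => ?_
        rw [Finset.sum_eq_single n]
        · rw [key, if_pos rfl, mul_one]
        · intro m _ hm; rw [key, if_neg (fun h => hm h.symm), mul_zero]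
        · intro h; exact absurd (Finset.mem_univ n) h
    _ = ip y x := by
        simp only [ip]
        exact Finset.sum_congr rfl fun n _ => mul_comm _ _

lemma expand_beta {N : ℕ} (e : Fin N → Fin N → ℂ)
    (he : ∀ i j, ip (e i) (e j) = if i = j then 1 else 0) (f v : Fin N → ℂ) :
    ∑ i, ip (e i) f * ip v (e i) = ip v f := by
  have key := complete e he
  calc ∑ i, ip (e i) f * ip v (e i)
      = ∑ i, ∑ n, ∑ m, ((starRingEnd ℂ) (f n) * v m) * (e i n * (starRingEnd ℂ) (e i m)) := by
        refine Finset.sum_congr rfl fun i _ => ?_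
        simp only [ip, Finset.sum_mul_sum]
        refine Finset.sum_congr rfl fun n _ => Finset.sum_congr rfl fun m _ => ?_
        ring
    _ = ∑ n, ∑ m, ((starRingEnd ℂ) (f n) * v m) * ∑ i, (e i n * (starRingEnd ℂ) (e i m)) := by
        rw [Finset.sum_comm]
        refine Finset.sum_congr rfl fun n _ => ?_
        rw [Finset.sum_comm]
        refine Finset.sum_congr rfl fun m _ => ?_
        rw [← Finset.mul_sum]
    _ = ∑ n, (starRingEnd ℂ) (f n) * v n := by
        refine Finset.sum_congr rfl fun n _ => ?_
        rw [Finset.sum_eq_single n]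
        · rw [key, if_pos rfl, mul_one]
        · intro m _ hm; rw [key, if_neg (fun h => hm h.symm), mul_zero]
        · intro h; exact absurd (Finset.mem_univ n) h
    _ = ip v f := by
        simp only [ip]
        exact Finset.sum_congr rfl fun n _ => mul_comm _ _

lemma parseval {N : ℕ} (e : Fin N → Fin N → ℂ)
    (he : ∀ i j, ip (e i) (e j) = if i = j then 1 else 0) (x : Fin N → ℂ) :
    ∑ i, Complex.normSq (ip (e i) x) = ∑ n, Complex.normSq (x n) := by
  have h := sum_ip_mul_conj e he x x
  have h2 : (↑(∑ i, Complex.normSq (ip (e i) x)) : ℂ) = ↑(∑ n, Complex.normSq (x n)) := by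
    push_cast
    calc (∑ i, (Complex.normSq (ip (e i) x) : ℂ))
        = ∑ i, ip (e i) x * (starRingEnd ℂ) (ip (e i) x) := by
          exact Finset.sum_congr rfl fun i _ => (Complex.mul_conj _).symm
      _ = ip x x := h
      _ = ∑ n, (Complex.normSq (x n) : ℂ) := by
          simp only [ip]
          exact Finset.sum_congr rfl fun n _ => Complex.mul_conj _
  exact_mod_cast h2

lemma ip_conj {N : ℕ} (x y : Fin N → ℂ) : ip x y = (starRingEnd ℂ) (ip y x) := by
  simp only [ip, map_sum, map_mul, starRingEnd_self_apply]
  exact Finset.sum_congr rfl fun n _ => (mul_comm _ _)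


/-- Elad–Bruckstein support uncertainty principle. -/
theorem stmt0 {N : ℕ} (f : Fin N → ℂ) (hf : f ≠ 0)
    (e u : Fin N → Fin N → ℂ)
    (he : ∀ i j, ip (e i) (e j) = if i = j then 1 else 0)
    (hu : ∀ i j, ip (u i) (u j) = if i = j then 1 else 0)
    (μ : ℝ) (hμ : μ = ⨆ q : Fin N × Fin N, ‖ip (e q.1) (u q.2)‖)
    (α β : Fin N → ℂ)
    (hα : ∀ i, α i = ip (e i) f) (hβ : ∀ l, β l = ip (u l) f) :
    1 / μ ≤ Real.sqrt ((l0 α : ℝ) * (l0 β : ℝ)) ∧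
      Real.sqrt ((l0 α : ℝ) * (l0 β : ℝ)) ≤ ((l0 α : ℝ) + (l0 β : ℝ)) / 2 := by
  have hN : 0 < N := by
    rcases Nat.eq_zero_or_pos N with h | h
    · exfalso; apply hf; subst h; funext n; exact n.elim0
    · exact h
  set i0 : Fin N := ⟨0, hN⟩
  -- μ is an upper bound
  have hbdd : BddAbove (Set.range fun q : Fin N × Fin N => ‖ip (e q.1) (u q.2)‖) :=
    Set.Finite.bddAbove (Set.finite_range _)
  have hle : ∀ i l, ‖ip (e i) (u l)‖ ≤ μ := by
    intro i l; rw [hμ]; exact le_ciSup hbdd (i, l)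
  -- μ is positive
  have hμpos : 0 < μ := by
    have h1 : ∑ j, Complex.normSq (ip (u j) (e i0)) = ∑ n, Complex.normSq (e i0 n) :=
      parseval u hu (e i0)
    have h3 : ∑ n, Complex.normSq (e i0 n) = 1 := by
      have h := he i0 i0
      rw [if_pos rfl] at h
      have h2 : (∑ n, (Complex.normSq (e i0 n) : ℂ)) = 1 := by
        rw [← h]; simp only [ip]
        exact Finset.sum_congr rfl fun n _ => (Complex.mul_conj _).symm
      exact_mod_cast h2
    have h4 : ∃ j, Complex.normSq (ip (u j) (e i0)) ≠ 0 := by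
      by_contra hcon
      push_neg at hcon
      rw [Finset.sum_congr rfl (fun j _ => hcon j), Finset.sum_const, smul_zero] at h1
      rw [h3] at h1; exact one_ne_zero h1.symm
    obtain ⟨j, hj⟩ := h4
    have hne : ip (e i0) (u j) ≠ 0 := by
      rw [ip_conj]
      intro h
      apply hj
      have : ip (u j) (e i0) = 0 := by
        have := congrArg (starRingEnd ℂ) h
        simpa using this
      rw [this]; simp
    exact lt_of_lt_of_le (norm_pos_iff.mpr hne) (hle i0 j)
  -- basic quantities
  set a : ℝ := (l0 α : ℝ) with ha
  set b : ℝ := (l0 β : ℝ) with hb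
  have ha0 : 0 ≤ a := Nat.cast_nonneg _
  have hb0 : 0 ≤ b := Nat.cast_nonneg _
  set c : ℝ := ∑ n, Complex.normSq (f n) with hc
  have hcpos : 0 < c := by
    obtain ⟨n, hn⟩ : ∃ n, f n ≠ 0 := by
      by_contra hcon; push_neg at hcon; exact hf (funext hcon)
    exact Finset.sum_pos' (fun m _ => Complex.normSq_nonneg _)
      ⟨n, Finset.mem_univ n, Complex.normSq_pos.mpr hn⟩
  have hPa : ∑ i, Complex.normSq (α i) = c := by
    simp only [hα]; exact parseval e he f
  have hPb : ∑ l, Complex.normSq (β l) = c := by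
    simp only [hβ]; exact parseval u hu f
  set sA := Finset.univ.filter (fun i => α i ≠ 0) with hsA
  set sB := Finset.univ.filter (fun l => β l ≠ 0) with hsB
  -- Cauchy–Schwarz: (∑ |α|)² ≤ a * c
  set S1 : ℝ := ∑ i, ‖α i‖ with hS1
  have hS1nn : 0 ≤ S1 := Finset.sum_nonneg fun i _ => norm_nonneg _
  have hCS : S1 ^ 2 ≤ a * c := by
    have hS1' : S1 = ∑ i ∈ sA, ‖α i‖ := by
      rw [hS1]
      refine (Finset.sum_subset (Finset.filter_subset _ _) ?_).symm
      intro i _ hi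
      simp only [Finset.mem_filter, Finset.mem_univ, true_and, not_not] at hi
      rw [hi, norm_zero]
    have hcs := Finset.sum_mul_sq_le_sq_mul_sq sA (fun _ => (1:ℝ)) (fun i => ‖α i‖)
    simp only [one_pow, one_mul, Finset.sum_const, nsmul_eq_mul, mul_one] at hcs
    have hsum2 : ∑ i ∈ sA, ‖α i‖ ^ 2 ≤ c := by
      rw [← hPa]
      calc ∑ i ∈ sA, ‖α i‖ ^ 2
          ≤ ∑ i, ‖α i‖ ^ 2 :=
            Finset.sum_le_sum_of_subset_of_nonneg (Finset.filter_subset _ _)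
              (fun i _ _ => sq_nonneg _)
        _ = ∑ i, Complex.normSq (α i) :=
            Finset.sum_congr rfl fun i _ => Complex.sq_norm _
    calc S1 ^ 2 = (∑ i ∈ sA, ‖α i‖) ^ 2 := by rw [hS1']
      _ ≤ (sA.card : ℝ) * ∑ i ∈ sA, ‖α i‖ ^ 2 := hcs
      _ ≤ (sA.card : ℝ) * c := by
          exact mul_le_mul_of_nonneg_left hsum2 (Nat.cast_nonneg _)
      _ = a * c := by rw [ha]; rfl
  -- max of |β|
  obtain ⟨lm, -, hmax⟩ := Finset.exists_max_image Finset.univ (fun l => ‖β l‖)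
    ⟨i0, Finset.mem_univ i0⟩
  set M : ℝ := ‖β lm‖ with hM
  have hMnn : 0 ≤ M := norm_nonneg _
  -- c ≤ b * M²
  have h1 : c ≤ b * M ^ 2 := by
    rw [← hPb]
    calc ∑ l, Complex.normSq (β l)
        = ∑ l ∈ sB, Complex.normSq (β l) := by
          refine (Finset.sum_subset (Finset.filter_subset _ _) ?_).symm
          intro l _ hl
          simp only [Finset.mem_filter, Finset.mem_univ, true_and, not_not] at hl
          rw [hl, Complex.normSq_zero]
      _ ≤ ∑ _l ∈ sB, M ^ 2 := by
          refine Finset.sum_le_sum fun l _ => ?_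
          rw [← Complex.sq_norm]
          exact pow_le_pow_left₀ (norm_nonneg _) (hmax l (Finset.mem_univ l)) 2
      _ = b * M ^ 2 := by
          rw [Finset.sum_const, nsmul_eq_mul, hb]; rfl
  -- M ≤ μ * S1
  have h2 : M ≤ μ * S1 := by
    have hexp : β lm = ∑ i, α i * ip (u lm) (e i) := by
      rw [hβ, ← expand_beta e he f (u lm)]
      exact Finset.sum_congr rfl fun i _ => by rw [hα]
    calc M = ‖∑ i, α i * ip (u lm) (e i)‖ := by rw [hM, hexp]
      _ ≤ ∑ i, ‖α i * ip (u lm) (e i)‖ :=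
          norm_sum_le _ _
      _ ≤ ∑ i, ‖α i‖ * μ := by
          refine Finset.sum_le_sum fun i _ => ?_
          rw [norm_mul]
          refine mul_le_mul_of_nonneg_left ?_ (norm_nonneg _)
          have : ‖ip (u lm) (e i)‖ = ‖ip (e i) (u lm)‖ := by
            rw [ip_conj (u lm) (e i), Complex.norm_conj]
          rw [this]; exact hle i lm
      _ = μ * S1 := by rw [← Finset.sum_mul, hS1, mul_comm]
  -- combine: 1 ≤ μ² a b
  have hkey : 1 ≤ μ ^ 2 * (a * b) := by
    have hM2 : M ^ 2 ≤ μ ^ 2 * S1 ^ 2 := by nlinarith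
    have t1 : b * M ^ 2 ≤ b * (μ ^ 2 * S1 ^ 2) := mul_le_mul_of_nonneg_left hM2 hb0
    have t2 : (b * μ ^ 2) * S1 ^ 2 ≤ (b * μ ^ 2) * (a * c) :=
      mul_le_mul_of_nonneg_left hCS (by positivity)
    nlinarith [hcpos, h1]
  have habnn : 0 ≤ a * b := mul_nonneg ha0 hb0
  have hs : Real.sqrt (a * b) ^ 2 = a * b := Real.sq_sqrt habnn
  have hsnn : 0 ≤ Real.sqrt (a * b) := Real.sqrt_nonneg _
  constructor
  · rw [div_le_iff₀ hμpos]
    have hx2 : 1 ≤ (Real.sqrt (a * b) * μ) ^ 2 := by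
      have hh : (Real.sqrt (a * b) * μ) ^ 2 = μ ^ 2 * (a * b) := by rw [mul_pow, hs]; ring
      rw [hh]; exact hkey
    nlinarith [hx2, mul_nonneg hsnn hμpos.le]
  · have hle2 : a * b ≤ ((a + b) / 2) ^ 2 := by nlinarith [sq_nonneg (a - b)]
    calc Real.sqrt (a * b) ≤ Real.sqrt (((a + b) / 2) ^ 2) := Real.sqrt_le_sqrt hle2
      _ = (a + b) / 2 := Real.sqrt_sq (by positivity)
end

section
/- Let U be a unitary N×N matrix with μ = max_{i,j} |U_{ij}|, and define the transform f̂ = U* f. Then for any f in C^N and any p with 1 ≤ p ≤ 2, ‖f‖_p · ‖f̂‖_p ≥ μ^{1 - 2/p} · ‖f‖_2². -/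
open Finset Matrix

noncomputable def lpnorm {ι : Type*} [Fintype ι] (p : ℝ) (f : ι → ℂ) : ℝ :=
  (∑ i, ‖f i‖ ^ p) ^ (1 / p)

open Complex in
lemma uncertainty_parseval {N : ℕ} {U : Matrix (Fin N) (Fin N) ℂ}
    (hU : U ∈ Matrix.unitaryGroup (Fin N) ℂ) (v : Fin N → ℂ) :
    ∑ k, ‖(Uᴴ.mulVec v) k‖ ^ (2:ℕ) = ∑ n, ‖v n‖ ^ (2:ℕ) := by
  have hUU : U * Uᴴ = 1 := Matrix.mem_unitaryGroup_iff.mp hU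
  have key : (Uᴴ.mulVec v) ⬝ᵥ star (Uᴴ.mulVec v) = v ⬝ᵥ star v := by
    rw [dotProduct_comm, Matrix.star_mulVec, Matrix.conjTranspose_conjTranspose,
      Matrix.dotProduct_mulVec, Matrix.vecMul_vecMul, hUU, Matrix.vecMul_one,
      dotProduct_comm]
  have cast : ∀ (w : Fin N → ℂ), w ⬝ᵥ star w = ((∑ i, ‖w i‖ ^ (2:ℕ) : ℝ) : ℂ) := by
    intro w
    simp only [dotProduct, Pi.star_apply, Complex.star_def, Complex.mul_conj,
      Complex.ofReal_sum, Complex.sq_norm]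
  rw [cast, cast] at key
  exact_mod_cast key

lemma uncertainty_rpow_aux {A t p : ℝ} (hA : 0 ≤ A) (hp : 0 < p) (ht1 : p/2 ≤ t) (ht2 : t ≤ p) :
    A ^ t ≤ A ^ (p/2) + A ^ p := by
  rcases eq_or_lt_of_le hA with h0 | h0
  · rw [← h0, Real.zero_rpow (ne_of_gt (by nlinarith : (0:ℝ) < t))]
    positivity
  · rcases le_or_gt A 1 with h1 | h1
    · have := Real.rpow_le_rpow_of_exponent_ge h0 h1 ht1
      have h2 : (0:ℝ) ≤ A ^ p := Real.rpow_nonneg hA p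
      linarith
    · have := Real.rpow_le_rpow_of_exponent_le h1.le ht2
      have h2 : (0:ℝ) ≤ A ^ (p/2) := Real.rpow_nonneg hA (p/2)
      linarith

lemma uncertainty_key {N : ℕ} {U : Matrix (Fin N) (Fin N) ℂ}
    (hU : U ∈ Matrix.unitaryGroup (Fin N) ℂ)
    {μ : ℝ} (hμ0 : 0 ≤ μ) (hμb : ∀ n k, ‖U n k‖ ≤ μ)
    (f g : Fin N → ℂ) {p : ℝ} (hp1 : 1 ≤ p) (hp2 : p ≤ 2) :
    ‖∑ n, ∑ k, (starRingEnd ℂ) (U n k) * f n * g k‖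
      ≤ μ ^ (2/p - 1) *
        ((∑ n, ‖f n‖ ^ p) * (∑ k, ‖g k‖ ^ p)) ^ (1/p) := by
  have hp0 : (0:ℝ) < p := lt_of_lt_of_le one_pos hp1
  set A : Fin N → ℝ := fun n => ‖f n‖ with hA
  set B : Fin N → ℝ := fun k => ‖g k‖ with hB
  set X : ℝ := ∑ n, A n ^ p with hX
  set Y : ℝ := ∑ k, B k ^ p with hY
  have hX0 : 0 ≤ X := Finset.sum_nonneg fun n _ => Real.rpow_nonneg (norm_nonneg _) _
  have hY0 : 0 ≤ Y := Finset.sum_nonneg fun k _ => Real.rpow_nonneg (norm_nonneg _) _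
  set e : ℂ → ℂ := fun z => (p:ℂ) - 1 - (p/2 : ℝ) * z with he
  set a : Fin N → ℂ → ℂ := fun n z => f n * (A n : ℂ) ^ (e z) with ha
  set b : Fin N → ℂ → ℂ := fun k z => g k * (B k : ℂ) ^ (e z) with hb
  set F : ℂ → ℂ := fun z => ∑ n, ∑ k, (starRingEnd ℂ) (U n k) * a n z * b k z with hF
  have h_ere : ∀ z : ℂ, (e z).re = p - 1 - (p/2) * z.re := by
    intro z
    simp [he, Complex.sub_re, Complex.mul_re, Complex.ofReal_re, Complex.ofReal_im,
      Complex.one_re]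
  have h_abs : ∀ (h : Fin N → ℂ) (n : Fin N) (z : ℂ), z.re ≤ 1 →
      ‖h n * (‖h n‖ : ℂ) ^ (e z)‖
        = ‖h n‖ ^ (p * (1 - z.re / 2)) := by
    intro h n z hz
    rcases eq_or_lt_of_le (norm_nonneg (h n)) with hc | hc
    · have h0 : h n = 0 := by rwa [eq_comm, norm_eq_zero] at hc
      rw [h0]
      simp only [map_zero, zero_mul, norm_zero]
      rw [eq_comm, Real.zero_rpow]
      apply ne_of_gt
      nlinarith
    · rw [norm_mul, Complex.norm_cpow_eq_rpow_re_of_pos hc, h_ere]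
      rw [show ‖h n‖ * ‖h n‖ ^ (p - 1 - p/2*z.re)
          = ‖h n‖ ^ (1 + (p - 1 - p/2*z.re)) by
        rw [Real.rpow_add hc, Real.rpow_one]]
      congr 1
      ring
  have h_de : Differentiable ℂ e := by
    rw [he]; fun_prop
  have h_da : ∀ (h : Fin N → ℂ) (n : Fin N),
      Differentiable ℂ (fun z => h n * (‖h n‖ : ℂ) ^ (e z)) := by
    intro h n
    by_cases h0 : h n = 0
    · simp only [h0, map_zero, norm_zero, Complex.ofReal_zero, zero_mul]
      exact differentiable_const 0
    · have hc : ((‖h n‖ : ℝ) : ℂ) ≠ 0 := by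
        simp [norm_eq_zero, h0]
      exact (h_de.const_cpow (Or.inl hc)).const_mul _
  have hdiff : Differentiable ℂ F := by
    rw [hF]
    apply Differentiable.fun_sum
    intro n _
    apply Differentiable.fun_sum
    intro k _
    exact (((h_da f n).const_mul _).mul (h_da g k))
  -- bounds for a, b on the closed strip
  have h_bd : ∀ (h : Fin N → ℂ) (n : Fin N) (z : ℂ), z.re ∈ Set.Icc (0:ℝ) 1 →
      ‖h n * (‖h n‖ : ℂ) ^ (e z)‖
        ≤ ‖h n‖ ^ (p/2) + ‖h n‖ ^ p := by
    intro h n z hz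
    rw [h_abs h n z hz.2]
    apply uncertainty_rpow_aux (norm_nonneg _) hp0
    · nlinarith [hz.1, hz.2]
    · nlinarith [hz.1, hz.2]
  have habsF : ∀ z : ℂ, ‖F z‖ ≤ ∑ n, ∑ k,
      ‖U n k‖ * (‖a n z‖ * ‖b k z‖) := by
    intro z
    refine (norm_sum_le _ _).trans ?_
    refine Finset.sum_le_sum fun n _ => ?_
    refine (norm_sum_le _ _).trans ?_
    refine Finset.sum_le_sum fun k _ => ?_
    rw [norm_mul, norm_mul, Complex.norm_conj, mul_assoc]
  have hbdd : BddAbove ((norm ∘ F) '' (Complex.HadamardThreeLines.verticalClosedStrip 0 1)) := by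
    refine ⟨∑ n, ∑ k, μ * ((A n ^ (p/2) + A n ^ p) * (B k ^ (p/2) + B k ^ p)), ?_⟩
    rintro x ⟨z, hz, rfl⟩
    refine (habsF z).trans ?_
    refine Finset.sum_le_sum fun n _ => Finset.sum_le_sum fun k _ => ?_
    have h1 := h_bd f n z hz
    have h2 := h_bd g k z hz
    have hbn : (0:ℝ) ≤ A n ^ (p/2) + A n ^ p := by positivity
    have hbk : (0:ℝ) ≤ B k ^ (p/2) + B k ^ p := by positivity
    refine mul_le_mul (hμb n k) ?_ (by positivity) hμ0
    exact mul_le_mul h1 h2 (norm_nonneg _) hbn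
  have h0 : ∀ z ∈ Complex.re ⁻¹' {(0:ℝ)}, ‖F z‖ ≤ μ * (X * Y) := by
    intro z hz
    have hz0 : z.re = 0 := hz
    refine (habsF z).trans ?_
    have heq : ∀ n k, ‖a n z‖ * ‖b k z‖ = A n ^ p * B k ^ p := by
      intro n k
      rw [ha, hb]
      simp only []
      rw [h_abs f n z (by rw [hz0]; norm_num), h_abs g k z (by rw [hz0]; norm_num), hz0]
      norm_num
      rfl
    calc ∑ n, ∑ k, ‖U n k‖ * (‖a n z‖ * ‖b k z‖)
        ≤ ∑ n, ∑ k, μ * (A n ^ p * B k ^ p) := by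
          refine Finset.sum_le_sum fun n _ => Finset.sum_le_sum fun k _ => ?_
          rw [heq n k]
          refine mul_le_mul_of_nonneg_right (hμb n k) (by positivity)
      _ = μ * (X * Y) := by
          rw [hX, hY, Finset.sum_mul_sum, Finset.mul_sum]
          exact Finset.sum_congr rfl fun n _ => by rw [Finset.mul_sum]
  have h1 : ∀ z ∈ Complex.re ⁻¹' {(1:ℝ)}, ‖F z‖ ≤ Real.sqrt X * Real.sqrt Y := by
    intro z hz
    have hz1 : z.re = 1 := hz
    have hswap : F z = ∑ k, (Uᴴ.mulVec (fun n => a n z)) k * b k z := by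
      rw [hF]
      simp only []
      rw [Finset.sum_comm]
      refine Finset.sum_congr rfl fun k _ => ?_
      simp only [Matrix.mulVec, dotProduct, Matrix.conjTranspose_apply, Finset.sum_mul,
        Complex.star_def]
    have hXeq : ∑ k, ‖(Uᴴ.mulVec (fun n => a n z)) k‖ ^ (2:ℕ) = X := by
      rw [uncertainty_parseval hU]
      refine Finset.sum_congr rfl fun n _ => ?_
      rw [ha]
      simp only []
      rw [h_abs f n z (le_of_eq hz1), hz1]
      rw [← Real.rpow_natCast (A n ^ (p * (1 - 1/2))) 2, ← Real.rpow_mul (norm_nonneg _)]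
      norm_num
      rw [show p * (1/2) * (2:ℝ) = p by ring]
    have hYeq : ∑ k, ‖b k z‖ ^ (2:ℕ) = Y := by
      refine Finset.sum_congr rfl fun k _ => ?_
      rw [hb]
      simp only []
      rw [h_abs g k z (le_of_eq hz1), hz1]
      rw [← Real.rpow_natCast (B k ^ (p * (1 - 1/2))) 2, ← Real.rpow_mul (norm_nonneg _)]
      norm_num
      rw [show p * (1/2) * (2:ℝ) = p by ring]
    calc ‖F z‖ = ‖∑ k, (Uᴴ.mulVec (fun n => a n z)) k * b k z‖ := by
          rw [← hswap]
      _ ≤ ∑ k, ‖(Uᴴ.mulVec (fun n => a n z)) k‖ * ‖b k z‖ := by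
          refine (norm_sum_le _ _).trans ?_
          refine Finset.sum_le_sum fun k _ => ?_
          rw [norm_mul]
      _ ≤ Real.sqrt (∑ k, ‖(Uᴴ.mulVec (fun n => a n z)) k‖ ^ 2) *
            Real.sqrt (∑ k, ‖b k z‖ ^ 2) :=
          Real.sum_mul_le_sqrt_mul_sqrt _ _ _
      _ = Real.sqrt X * Real.sqrt Y := by rw [hXeq, hYeq]
  set θ : ℝ := 2 - 2/p with hθ
  have hθ0 : 0 ≤ θ := by
    have : 2/p ≤ 2 := by rw [div_le_iff₀ hp0]; nlinarith
    simp only [hθ]; linarith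
  have hθ1 : θ ≤ 1 := by
    have : 1 ≤ 2/p := by rw [le_div_iff₀ hp0]; linarith
    simp only [hθ]; linarith
  have hmem : (θ : ℂ) ∈ Complex.HadamardThreeLines.verticalClosedStrip 0 1 := by
    simp [Complex.HadamardThreeLines.verticalClosedStrip, Set.mem_Icc, hθ0, hθ1]
  have main := Complex.HadamardThreeLines.norm_le_interp_of_mem_verticalClosedStrip₀₁' F hmem
    hdiff.diffContOnCl hbdd h0 h1
  have hFθ : F (θ : ℂ) = ∑ n, ∑ k, (starRingEnd ℂ) (U n k) * f n * g k := by
    have heθ : e (θ : ℂ) = 0 := by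
      rw [he]
      simp only []
      have hcast : ((p:ℂ) - 1 - ((p/2 : ℝ) : ℂ) * ((θ : ℝ) : ℂ)) = ((p - 1 - (p/2)*θ : ℝ) : ℂ) := by
        push_cast; ring
      rw [hcast, show p - 1 - (p/2)*θ = 0 by rw [hθ]; field_simp; ring]
      norm_num
    rw [hF]
    simp only [ha, hb, heθ, Complex.cpow_zero, mul_one]
  rw [hFθ] at main
  refine main.trans ?_
  rw [Complex.ofReal_re]
  set P : ℝ := X * Y with hP
  have hP0 : 0 ≤ P := mul_nonneg hX0 hY0
  have hsq : Real.sqrt X * Real.sqrt Y = P ^ (1/2 : ℝ) := by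
    rw [← Real.sqrt_mul hX0, Real.sqrt_eq_rpow]
  rw [hsq, Real.mul_rpow hμ0 hP0, ← Real.rpow_mul hP0]
  rw [mul_assoc, ← Real.rpow_add_of_nonneg hP0 (by linarith) (by positivity : (0:ℝ) ≤ 1/2 * θ)]
  rw [show (1:ℝ) - θ + 1/2 * θ = 1/p by rw [hθ]; ring]
  rw [show (1:ℝ) - θ = 2/p - 1 by rw [hθ]; ring]

/-- ℓ^p-norm uncertainty principle for a unitary Fourier-type transform. -/
theorem stmt1 {N : ℕ} (U : Matrix (Fin N) (Fin N) ℂ)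
    (hU : U ∈ Matrix.unitaryGroup (Fin N) ℂ)
    (μ : ℝ) (hμ : μ = ⨆ q : Fin N × Fin N, ‖U q.1 q.2‖)
    (f : Fin N → ℂ) (p : ℝ) (hp1 : 1 ≤ p) (hp2 : p ≤ 2) :
    μ ^ (1 - 2 / p) * (lpnorm 2 f) ^ 2 ≤ lpnorm p f * lpnorm p (Uᴴ.mulVec f) := by
  have hp0 : (0:ℝ) < p := lt_of_lt_of_le one_pos hp1
  rcases Nat.eq_zero_or_pos N with hN | hN
  · subst hN
    have h2 : lpnorm 2 f = 0 := by
      simp only [lpnorm, Finset.univ_eq_empty, Finset.sum_empty]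
      exact Real.zero_rpow (by norm_num)
    have hpf : lpnorm p f = 0 := by
      simp only [lpnorm, Finset.univ_eq_empty, Finset.sum_empty]
      exact Real.zero_rpow (by positivity)
    rw [h2, hpf]
    norm_num
  · have hne : Nonempty (Fin N × Fin N) := ⟨(⟨0, hN⟩, ⟨0, hN⟩)⟩
    have hbddA : BddAbove (Set.range fun q : Fin N × Fin N => ‖U q.1 q.2‖) :=
      (Set.finite_range _).bddAbove
    have hμb : ∀ n k, ‖U n k‖ ≤ μ := by
      intro n k
      rw [hμ]
      exact le_ciSup hbddA (n, k)
    have hμ0 : 0 ≤ μ := le_trans (norm_nonneg _) (hμb ⟨0, hN⟩ ⟨0, hN⟩)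
    have hμpos : 0 < μ := by
      rcases lt_or_eq_of_le hμ0 with h | h
      · exact h
      · exfalso
        have hz : ∀ n k, U n k = 0 := by
          intro n k
          have := hμb n k
          rw [← h] at this
          exact norm_eq_zero.mp (le_antisymm this (norm_nonneg _))
        have hUU : U * Uᴴ = 1 := Matrix.mem_unitaryGroup_iff.mp hU
        have h1 : (U * Uᴴ) ⟨0, hN⟩ ⟨0, hN⟩ = 1 := by rw [hUU]; simp
        rw [Matrix.mul_apply] at h1
        simp only [hz, zero_mul] at h1
        simp at h1
    set g : Fin N → ℂ := fun k => (starRingEnd ℂ) ((Uᴴ.mulVec f) k) with hg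
    have hhat : ∀ k, (∑ n, (starRingEnd ℂ) (U n k) * f n) = (Uᴴ.mulVec f) k := by
      intro k
      simp [Matrix.mulVec, dotProduct, Matrix.conjTranspose_apply, Complex.star_def]
    have hS : (∑ n, ∑ k, (starRingEnd ℂ) (U n k) * f n * g k)
        = ((∑ k, ‖(Uᴴ.mulVec f) k‖ ^ (2:ℕ) : ℝ) : ℂ) := by
      rw [Finset.sum_comm, Complex.ofReal_sum]
      refine Finset.sum_congr rfl fun k _ => ?_
      rw [← Finset.sum_mul, hhat k, hg]
      simp only []
      rw [Complex.mul_conj, ← Complex.sq_norm]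
    have habsS : ‖∑ n, ∑ k, (starRingEnd ℂ) (U n k) * f n * g k‖
        = ∑ n, ‖f n‖ ^ (2:ℕ) := by
      rw [hS, Complex.norm_real, Real.norm_of_nonneg (by positivity), uncertainty_parseval hU]
    have hkey := uncertainty_key hU hμ0 hμb f g hp1 hp2
    rw [habsS] at hkey
    have hgabs : ∀ k, ‖g k‖ = ‖(Uᴴ.mulVec f) k‖ := by
      intro k
      rw [hg]
      exact Complex.norm_conj _
    simp only [hgabs] at hkey
    -- rewrite lpnorms
    set Xf : ℝ := ∑ n, ‖f n‖ ^ p with hXf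
    set Xh : ℝ := ∑ k, ‖(Uᴴ.mulVec f) k‖ ^ p with hXh
    have hXf0 : 0 ≤ Xf := Finset.sum_nonneg fun n _ => Real.rpow_nonneg (norm_nonneg _) _
    have hXh0 : 0 ≤ Xh := Finset.sum_nonneg fun k _ => Real.rpow_nonneg (norm_nonneg _) _
    have hlp : lpnorm p f * lpnorm p (Uᴴ.mulVec f) = (Xf * Xh) ^ (1/p : ℝ) := by
      simp only [lpnorm]
      rw [← Real.mul_rpow hXf0 hXh0]
    have hsum2 : (0:ℝ) ≤ ∑ n, ‖f n‖ ^ (2:ℕ) :=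
      Finset.sum_nonneg fun n _ => by positivity
    have hT : (lpnorm 2 f) ^ 2 = ∑ n, ‖f n‖ ^ (2:ℕ) := by
      have h1 : lpnorm 2 f = (∑ n, ‖f n‖ ^ (2:ℕ) : ℝ) ^ ((1:ℝ)/2) := by
        simp only [lpnorm]
        congr 1
        refine Finset.sum_congr rfl fun n _ => ?_
        rw [← Real.rpow_natCast (‖f n‖) 2]
        norm_num
      rw [h1, ← Real.rpow_natCast ((∑ n, ‖f n‖ ^ (2:ℕ) : ℝ) ^ ((1:ℝ)/2)) 2,
        ← Real.rpow_mul hsum2]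
      norm_num
    rw [hT, hlp]
    calc μ ^ (1 - 2/p) * (∑ n, ‖f n‖ ^ (2:ℕ))
        ≤ μ ^ (1 - 2/p) * (μ ^ (2/p - 1) * (Xf * Xh) ^ (1/p : ℝ)) := by
          exact mul_le_mul_of_nonneg_left hkey (Real.rpow_nonneg hμ0 _)
      _ = (Xf * Xh) ^ (1/p : ℝ) := by
          rw [← mul_assoc, ← Real.rpow_add hμpos]
          norm_num
end

section
/- Let U be a unitary N×N matrix with μ = max_{i,j} |U_{ij}|, and f̂ = U* f. For any f in C^N, the Shannon entropies satisfy H(f/‖f‖_2) + H(f̂/‖f̂‖_2) ≥ -2 ln μ, where H(g) = -Σ_n |g(n)|² ln |g(n)|². -/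
open Finset Matrix

noncomputable def entropy {N : ℕ} (g : Fin N → ℂ) : ℝ :=
  -∑ n, ‖g n‖ ^ 2 * Real.log (‖g n‖ ^ 2)

lemma aux_UUH {N : ℕ} (U : Matrix (Fin N) (Fin N) ℂ)
    (hU : U ∈ Matrix.unitaryGroup (Fin N) ℂ) : U * Uᴴ = 1 := by
  rw [← Matrix.star_eq_conjTranspose]; exact hU.2

lemma aux_norm_sq {N : ℕ} (U : Matrix (Fin N) (Fin N) ℂ)
    (hU : U ∈ Matrix.unitaryGroup (Fin N) ℂ) (v : Fin N → ℂ) :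
    ∑ m, ‖(Uᴴ *ᵥ v) m‖ ^ 2 = ∑ n, ‖v n‖ ^ 2 := by
  have key : star (Uᴴ *ᵥ v) ⬝ᵥ (Uᴴ *ᵥ v) = star v ⬝ᵥ v := by
    rw [star_mulVec, conjTranspose_conjTranspose, dotProduct_mulVec, vecMul_vecMul,
      aux_UUH U hU, Matrix.vecMul_one]
  have cast : ∀ (w : Fin N → ℂ), star w ⬝ᵥ w = ((∑ m, ‖w m‖ ^ 2 : ℝ) : ℂ) := by
    intro w
    simp only [dotProduct, Pi.star_apply, Complex.star_def]
    push_cast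
    congr 1; ext m
    rw [mul_comm, Complex.mul_conj, ← Complex.sq_norm]
    push_cast; ring
  rw [cast, cast] at key
  exact_mod_cast key

lemma aux_mulVec_ne {N : ℕ} (U : Matrix (Fin N) (Fin N) ℂ)
    (hU : U ∈ Matrix.unitaryGroup (Fin N) ℂ) (v : Fin N → ℂ) (hv : v ≠ 0) :
    Uᴴ *ᵥ v ≠ 0 := by
  intro h
  apply hv
  have : U *ᵥ (Uᴴ *ᵥ v) = v := by
    rw [Matrix.mulVec_mulVec, aux_UUH U hU, Matrix.one_mulVec]
  rw [h, Matrix.mulVec_zero] at this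
  exact this.symm

lemma aux_mu_le {N : ℕ} (U : Matrix (Fin N) (Fin N) ℂ) (μ : ℝ)
    (hμ : μ = ⨆ q : Fin N × Fin N, ‖U q.1 q.2‖) (i j : Fin N) :
    ‖U i j‖ ≤ μ := by
  rw [hμ]
  exact le_ciSup (f := fun q : Fin N × Fin N => ‖U q.1 q.2‖)
    (Set.Finite.bddAbove (Set.finite_range _)) ⟨i, j⟩

lemma aux_mu_pos {N : ℕ} (U : Matrix (Fin N) (Fin N) ℂ)
    (hU : U ∈ Matrix.unitaryGroup (Fin N) ℂ) (μ : ℝ)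
    (hμ : μ = ⨆ q : Fin N × Fin N, ‖U q.1 q.2‖) (i : Fin N) : 0 < μ := by
  by_contra h
  push_neg at h
  have hz : U = 0 := by
    ext a b
    have h1 := aux_mu_le U μ hμ a b
    have : ‖U a b‖ = 0 := le_antisymm (h1.trans h) (norm_nonneg _)
    simpa using this
  have h1 : star U * U = 1 := hU.1
  rw [hz, mul_zero] at h1
  have := congrFun (congrFun h1 i) i
  simp [Matrix.one_apply_eq] at this

lemma aux_abs (t : ℂ) (e : ℂ) (he : 0 < e.re) :
    ‖(t / (‖t‖ : ℂ)) * Complex.exp (e * (Real.log (‖t‖) : ℂ))‖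
      = ‖t‖ ^ e.re := by
  by_cases h : t = 0
  · simp [h, Real.zero_rpow (ne_of_gt he)]
  · have ht : 0 < ‖t‖ := norm_pos_iff.mpr h
    rw [norm_mul, norm_div, Complex.norm_real, Real.norm_eq_abs, abs_of_pos ht, div_self (ne_of_gt ht),
      one_mul, Complex.norm_exp, Real.rpow_def_of_pos ht]
    congr 1
    simp [Complex.mul_re, mul_comm]

lemma aux_re2 (a : ℝ) (z : ℂ) : ((a : ℂ) * (2 - z)).re = a * (2 - z.re) := by
  simp [Complex.mul_re, Complex.sub_re, Complex.sub_im]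

lemma aux_abs2 (t : ℂ) (a : ℝ) (ha : 0 < a) (z : ℂ) (hz : z.re < 2) :
    ‖(t / (‖t‖ : ℂ)) *
        Complex.exp ((a:ℂ) * (2 - z) * (Real.log (‖t‖) : ℂ))‖
      = ‖t‖ ^ (a * (2 - z.re)) := by
  have h1 : 0 < ((a:ℂ) * (2 - z)).re := by rw [aux_re2]; nlinarith
  rw [aux_abs t _ h1, aux_re2]

lemma aux_abs2' (t : ℂ) (a : ℝ) (ha : 0 < a) (z : ℂ) (hz : z.re < 2) :
    ‖((starRingEnd ℂ) t / (‖t‖ : ℂ)) *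
        Complex.exp ((a:ℂ) * (2 - z) * (Real.log (‖t‖) : ℂ))‖
      = ‖t‖ ^ (a * (2 - z.re)) := by
  have := aux_abs2 ((starRingEnd ℂ) t) a ha z hz
  rwa [Complex.norm_conj] at this

lemma aux_rpow_bound (a t1 t2 t : ℝ) (ha : 0 ≤ a) (h1 : 0 < t1) (h2 : t1 ≤ t) (h3 : t ≤ t2) :
    a ^ t ≤ a ^ t1 + a ^ t2 := by
  rcases eq_or_lt_of_le ha with h | h
  · rw [← h, Real.zero_rpow (by linarith : t ≠ 0)]
    positivity
  rcases le_total a 1 with h4 | h4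
  · have := Real.rpow_le_rpow_of_exponent_ge h h4 h2
    have h5 : (0:ℝ) ≤ a ^ t2 := Real.rpow_nonneg ha _
    linarith
  · have := Real.rpow_le_rpow_of_exponent_le h4 h3
    have h5 : (0:ℝ) ≤ a ^ t1 := Real.rpow_nonneg ha _
    linarith

section
variable {N : ℕ} (U : Matrix (Fin N) (Fin N) ℂ)

lemma aux_RT (hU : U ∈ Matrix.unitaryGroup (Fin N) ℂ) (μ : ℝ)
    (hμpos : 0 < μ) (hμle : ∀ i j, ‖U i j‖ ≤ μ)
    (g : Fin N → ℂ) (hg : g ≠ 0) (θ : ℝ) (hθ0 : 0 < θ) (hθ1 : θ < 1)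
    (Q S : ℝ) (hQ : Q = ∑ m, ‖(Uᴴ *ᵥ g) m‖ ^ (2/θ))
    (hS : S = ∑ n, ‖g n‖ ^ (2/(2-θ))) :
    Real.exp ((θ - 1) * Real.log μ) * Q ≤ (Q * S) ^ (1 - θ/2) := by
  have h2θ : (0:ℝ) < 2 - θ := by linarith
  set L : ℝ := Real.log μ with hL
  set p : ℝ := 2 / (2 - θ) with hp
  set q : ℝ := 2 / θ with hq
  have hppos : 0 < p := by positivity
  have hqpos : 0 < q := by positivity
  set gh : Fin N → ℂ := Uᴴ *ᵥ g with hgh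
  have hghne : gh ≠ 0 := aux_mulVec_ne U hU g hg
  have hQpos : 0 < Q := by
    obtain ⟨m0, hm0⟩ := Function.ne_iff.1 hghne
    rw [hQ]
    refine Finset.sum_pos' (fun i _ => Real.rpow_nonneg (norm_nonneg _) _) ⟨m0, mem_univ _, ?_⟩
    exact Real.rpow_pos_of_pos (norm_pos_iff.mpr hm0) _
  have hSpos : 0 < S := by
    obtain ⟨n0, hn0⟩ := Function.ne_iff.1 hg
    rw [hS]
    refine Finset.sum_pos' (fun i _ => Real.rpow_nonneg (norm_nonneg _) _) ⟨n0, mem_univ _, ?_⟩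
    exact Real.rpow_pos_of_pos (norm_pos_iff.mpr hn0) _
  -- the analytic family
  set G : ℂ → Fin N → ℂ := fun z n =>
    (g n / (‖g n‖ : ℂ)) *
      Complex.exp (((p/2 : ℝ) : ℂ) * (2 - z) * ((Real.log (‖g n‖)) : ℂ)) with hG
  set H : ℂ → Fin N → ℂ := fun z m =>
    ((starRingEnd ℂ) (gh m) / (‖gh m‖ : ℂ)) *
      Complex.exp (((q/2 : ℝ) : ℂ) * (2 - z) * ((Real.log (‖gh m‖)) : ℂ)) with hH
  set F : ℂ → ℂ := fun z =>
    Complex.exp ((z - 1) * (L : ℂ)) * ∑ m, H z m * ∑ n, Uᴴ m n * G z n with hF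
  have habsG : ∀ (z : ℂ) (n : Fin N), z.re < 2 →
      ‖G z n‖ = ‖g n‖ ^ (p/2 * (2 - z.re)) := by
    intro z n hz
    exact aux_abs2 (g n) (p/2) (by positivity) z hz
  have habsH : ∀ (z : ℂ) (m : Fin N), z.re < 2 →
      ‖H z m‖ = ‖gh m‖ ^ (q/2 * (2 - z.re)) := by
    intro z m hz
    exact aux_abs2' (gh m) (q/2) (by positivity) z hz
  have habsexp : ∀ z : ℂ, ‖Complex.exp ((z - 1) * (L : ℂ))‖
      = Real.exp ((z.re - 1) * L) := by
    intro z
    rw [Complex.norm_exp]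
    congr 1
    simp [Complex.mul_re, Complex.sub_re, Complex.sub_im]
  have hUH : ∀ m n, ‖Uᴴ m n‖ ≤ μ := by
    intro m n
    rw [Matrix.conjTranspose_apply, Complex.star_def, Complex.norm_conj]
    exact hμle n m
  -- edge bounds
  have edge0 : ∀ z : ℂ, z.re = 0 → ‖F z‖ ≤ Q * S := by
    intro z hz
    have hz2 : z.re < 2 := by rw [hz]; norm_num
    rw [hF]
    simp only []
    rw [norm_mul, habsexp, hz]
    have hinner : ∀ m, ‖∑ n, Uᴴ m n * G z n‖ ≤ μ * S := by
      intro m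
      refine le_trans (norm_sum_le _ _) ?_
      rw [hS, Finset.mul_sum]
      refine Finset.sum_le_sum fun n _ => ?_
      rw [norm_mul, habsG z n hz2, hz]
      have h1 : ‖g n‖ ^ (p/2 * (2 - 0)) = ‖g n‖ ^ p := by
        norm_num
      rw [h1]
      exact mul_le_mul_of_nonneg_right (hUH m n) (Real.rpow_nonneg (norm_nonneg _) _)
    have houter : ‖∑ m, H z m * ∑ n, Uᴴ m n * G z n‖ ≤ Q * (μ * S) := by
      refine le_trans (norm_sum_le _ _) ?_
      rw [hQ, Finset.sum_mul]
      refine Finset.sum_le_sum fun m _ => ?_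
      rw [norm_mul, habsH z m hz2, hz]
      have h1 : ‖gh m‖ ^ (q/2 * (2 - 0)) = ‖gh m‖ ^ q := by
        norm_num
      rw [h1]
      exact mul_le_mul_of_nonneg_left (hinner m) (Real.rpow_nonneg (norm_nonneg _) _)
    calc Real.exp ((0 - 1) * L) * ‖∑ m, H z m * ∑ n, Uᴴ m n * G z n‖
        ≤ Real.exp ((0 - 1) * L) * (Q * (μ * S)) :=
          mul_le_mul_of_nonneg_left houter (Real.exp_nonneg _)
      _ = Q * S := by
          rw [show ((0:ℝ) - 1) * L = -L by ring, hL, Real.exp_neg, Real.exp_log hμpos]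
          field_simp
  have edge1 : ∀ z : ℂ, z.re = 1 → ‖F z‖ ≤ Real.sqrt (Q * S) := by
    intro z hz
    have hz2 : z.re < 2 := by rw [hz]; norm_num
    have hHsq : ∑ m, ‖H z m‖ ^ 2 = Q := by
      rw [hQ]
      refine Finset.sum_congr rfl fun m _ => ?_
      rw [habsH z m hz2, hz, ← Real.rpow_natCast (‖gh m‖ ^ (q/2 * (2-1))) 2,
        ← Real.rpow_mul (norm_nonneg _)]
      norm_num
    have hGsq : ∑ m, ‖(Uᴴ *ᵥ G z) m‖ ^ 2 = S := by
      rw [aux_norm_sq U hU (G z), hS]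
      refine Finset.sum_congr rfl fun n _ => ?_
      rw [habsG z n hz2, hz, ← Real.rpow_natCast (‖g n‖ ^ (p/2 * (2-1))) 2,
        ← Real.rpow_mul (norm_nonneg _)]
      norm_num
    have hmv : ∀ m, ∑ n, Uᴴ m n * G z n = (Uᴴ *ᵥ G z) m := by
      intro m; simp [Matrix.mulVec, dotProduct]
    rw [hF]
    simp only []
    rw [norm_mul, habsexp, hz]
    rw [show ((1:ℝ) - 1) * L = 0 by ring, Real.exp_zero, one_mul]
    have hCS : ‖∑ m, H z m * ∑ n, Uᴴ m n * G z n‖ ≤ Real.sqrt (Q * S) := by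
      refine le_trans (norm_sum_le _ _) ?_
      have h1 : ∀ m, ‖H z m * ∑ n, Uᴴ m n * G z n‖
          = ‖H z m‖ * ‖(Uᴴ *ᵥ G z) m‖ := by
        intro m; rw [norm_mul, hmv]
      simp only [h1]
      have h2 := Finset.sum_mul_sq_le_sq_mul_sq Finset.univ
        (fun m => ‖H z m‖) (fun m => ‖(Uᴴ *ᵥ G z) m‖)
      rw [hHsq, hGsq] at h2
      have h3 : 0 ≤ ∑ m, ‖H z m‖ * ‖(Uᴴ *ᵥ G z) m‖ :=
        Finset.sum_nonneg fun m _ => mul_nonneg (norm_nonneg _) (norm_nonneg _)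
      nlinarith [Real.sq_sqrt (le_of_lt (mul_pos hQpos hSpos)),
        Real.sqrt_nonneg (Q * S)]
    exact hCS

  -- differentiability
  have hdiffG : ∀ n, Differentiable ℂ (fun z => G z n) := by
    intro n
    have h1 : Differentiable ℂ (fun z : ℂ =>
        ((p/2 : ℝ) : ℂ) * (2 - z) * ((Real.log (‖g n‖)) : ℂ)) := by
      apply Differentiable.mul_const
      exact Differentiable.const_mul ((differentiable_const (2:ℂ)).sub differentiable_id) _
    exact (differentiable_const _).mul (Complex.differentiable_exp.comp h1)
  have hdiffH : ∀ m, Differentiable ℂ (fun z => H z m) := by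
    intro m
    have h1 : Differentiable ℂ (fun z : ℂ =>
        ((q/2 : ℝ) : ℂ) * (2 - z) * ((Real.log (‖gh m‖)) : ℂ)) := by
      apply Differentiable.mul_const
      exact Differentiable.const_mul ((differentiable_const (2:ℂ)).sub differentiable_id) _
    exact (differentiable_const _).mul (Complex.differentiable_exp.comp h1)
  have hdiff : Differentiable ℂ F := by
    apply Differentiable.mul
    · exact Complex.differentiable_exp.comp
        ((differentiable_id.sub (differentiable_const 1)).mul_const _)
    · apply Differentiable.fun_sum
      intro m _
      exact (hdiffH m).mul (Differentiable.fun_sum fun n _ =>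
        (hdiffG n).const_mul _)
  have hd : DiffContOnCl ℂ F (Complex.HadamardThreeLines.verticalStrip 0 1) :=
    hdiff.diffContOnCl
  -- boundedness on the strip
  set bH : Fin N → ℝ := fun m => ‖gh m‖ ^ (q/2) + ‖gh m‖ ^ q with hbH
  set bG : Fin N → ℝ := fun n => ‖g n‖ ^ (p/2) + ‖g n‖ ^ p with hbG
  have hbHnn : ∀ m, 0 ≤ bH m := fun m => by
    rw [hbH]; positivity
  have hbGnn : ∀ n, 0 ≤ bG n := fun n => by
    rw [hbG]; positivity
  have hbdd : BddAbove
      ((norm ∘ F) '' Complex.HadamardThreeLines.verticalClosedStrip 0 1) := by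
    refine ⟨Real.exp |L| * ∑ m, bH m * (μ * ∑ n, bG n), ?_⟩
    rintro y ⟨z, hz, rfl⟩
    have hz01 : z.re ∈ Set.Icc (0:ℝ) 1 := hz
    have hz2 : z.re < 2 := lt_of_le_of_lt hz01.2 (by norm_num)
    simp only [Function.comp_apply]
    rw [hF]
    simp only []
    rw [norm_mul, habsexp]
    have e1 : Real.exp ((z.re - 1) * L) ≤ Real.exp |L| := by
      apply Real.exp_le_exp.2
      have h2 : |z.re - 1| ≤ 1 := by
        obtain ⟨ha, hb⟩ := Set.mem_Icc.1 hz01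
        rw [abs_le]; constructor <;> linarith
      have h3 : |(z.re - 1) * L| ≤ |L| := by
        rw [abs_mul]
        nlinarith [abs_nonneg L]
      linarith [le_abs_self ((z.re - 1) * L)]
    have e2 : ‖∑ m, H z m * ∑ n, Uᴴ m n * G z n‖
        ≤ ∑ m, bH m * (μ * ∑ n, bG n) := by
      refine le_trans (norm_sum_le _ _) (Finset.sum_le_sum fun m _ => ?_)
      rw [norm_mul]
      have hH1 : ‖H z m‖ ≤ bH m := by
        rw [habsH z m hz2, hbH]
        apply aux_rpow_bound _ _ _ _ (norm_nonneg _) (by positivity)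
        · nlinarith [hz01.2]
        · nlinarith [hz01.1]
      have hG1 : ‖∑ n, Uᴴ m n * G z n‖ ≤ μ * ∑ n, bG n := by
        refine le_trans (norm_sum_le _ _) ?_
        rw [Finset.mul_sum]
        refine Finset.sum_le_sum fun n _ => ?_
        rw [norm_mul]
        have hG2 : ‖G z n‖ ≤ bG n := by
          rw [habsG z n hz2, hbG]
          apply aux_rpow_bound _ _ _ _ (norm_nonneg _) (by positivity)
          · nlinarith [hz01.2]
          · nlinarith [hz01.1]
        exact mul_le_mul (hUH m n) hG2 (norm_nonneg _) (le_of_lt hμpos)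
      exact mul_le_mul hH1 hG1 (norm_nonneg _) (hbHnn m)
    exact mul_le_mul e1 e2 (norm_nonneg _) (Real.exp_nonneg _)
  -- value at θ
  have hGθ : ∀ n, G (↑θ) n = g n := by
    intro n
    by_cases hn : g n = 0
    · simp [hG, hn]
    · have habs : (0:ℝ) < ‖g n‖ := norm_pos_iff.mpr hn
      rw [hG]
      simp only []
      have hone : ((p/2:ℝ):ℂ) * (2 - (θ:ℂ)) = 1 := by
        rw [show ((2:ℂ) - (θ:ℂ)) = ((2 - θ : ℝ) : ℂ) by push_cast; ring,
          ← Complex.ofReal_mul]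
        rw [show (p/2) * (2 - θ) = 1 by rw [hp]; field_simp]
        norm_num
      rw [hone, one_mul, ← Complex.ofReal_exp, Real.exp_log habs, div_mul_cancel₀]
      exact_mod_cast ne_of_gt habs
  have hHθ : ∀ m, H (↑θ) m * gh m = ((‖gh m‖ ^ q : ℝ) : ℂ) := by
    intro m
    by_cases hm : gh m = 0
    · simp [hH, hm, Real.zero_rpow (ne_of_gt hqpos)]
    · have habs : (0:ℝ) < ‖gh m‖ := norm_pos_iff.mpr hm
      rw [hH]
      simp only []
      have hexp : ((q/2:ℝ):ℂ) * (2 - (θ:ℂ)) * ((Real.log (‖gh m‖)) : ℂ)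
          = (((q - 1) * Real.log (‖gh m‖) : ℝ) : ℂ) := by
        rw [show ((2:ℂ) - (θ:ℂ)) = ((2 - θ : ℝ) : ℂ) by push_cast; ring,
          ← Complex.ofReal_mul, ← Complex.ofReal_mul]
        congr 1
        rw [hq]; field_simp
      rw [hexp, ← Complex.ofReal_exp]
      have hpow : Real.exp ((q - 1) * Real.log (‖gh m‖))
          = ‖gh m‖ ^ (q - 1) := by
        rw [Real.rpow_def_of_pos habs, mul_comm]
      rw [hpow]
      have hconj : (starRingEnd ℂ) (gh m) * gh m = ((‖gh m‖ ^ 2 : ℝ) : ℂ) := by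
        rw [mul_comm, Complex.mul_conj, ← Complex.sq_norm]
      have hcast : (‖gh m‖ : ℂ) ≠ 0 := by exact_mod_cast ne_of_gt habs
      rw [div_mul_eq_mul_div, div_mul_eq_mul_div, div_eq_iff hcast, mul_right_comm,
        mul_comm ((starRingEnd ℂ) (gh m)) _]
      rw [show gh m * (starRingEnd ℂ) (gh m) * (‖gh m‖ ^ (q-1) : ℝ)
          = ((starRingEnd ℂ) (gh m) * gh m) * ((‖gh m‖ ^ (q-1) : ℝ) : ℂ) by ring,
        hconj, ← Complex.ofReal_mul, ← Complex.ofReal_mul]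
      congr 1
      rw [show q = 1 + (q - 1) by ring, Real.rpow_add habs, Real.rpow_one]
      ring_nf
  have hmvθ : ∀ m, ∑ n, Uᴴ m n * G ↑θ n = gh m := by
    intro m
    rw [hgh]
    simp [Matrix.mulVec, dotProduct, hGθ]
  have hFθ : ‖F ↑θ‖ = Real.exp ((θ - 1) * L) * Q := by
    rw [hF]
    simp only []
    have hsum : ∑ m, H ↑θ m * ∑ n, Uᴴ m n * G ↑θ n = ((Q:ℝ):ℂ) := by
      rw [hQ, Complex.ofReal_sum]
      refine Finset.sum_congr rfl fun m _ => ?_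
      rw [hmvθ m, hHθ m]
    rw [hsum, norm_mul, habsexp, Complex.ofReal_re, Complex.norm_real, Real.norm_eq_abs,
      abs_of_pos hQpos]
  -- apply Hadamard three lines
  have hmem : (↑θ : ℂ) ∈ Complex.HadamardThreeLines.verticalClosedStrip 0 1 := by
    simp only [Complex.HadamardThreeLines.verticalClosedStrip, Set.mem_preimage,
      Complex.ofReal_re, Set.mem_Icc]
    exact ⟨le_of_lt hθ0, le_of_lt hθ1⟩
  have had := Complex.HadamardThreeLines.norm_le_interp_of_mem_verticalClosedStrip₀₁' F hmem hd hbdd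
    (fun z hz => by exact edge0 z (by simpa using hz))
    (fun z hz => by exact edge1 z (by simpa using hz))
  rw [hFθ, Complex.ofReal_re] at had
  refine le_trans had (le_of_eq ?_)
  have hQS : 0 < Q * S := mul_pos hQpos hSpos
  rw [Real.sqrt_eq_rpow, ← Real.rpow_mul (le_of_lt hQS), ← Real.rpow_add hQS]
  congr 1
  ring
end

lemma aux_main {N : ℕ} (U : Matrix (Fin N) (Fin N) ℂ)
    (hU : U ∈ Matrix.unitaryGroup (Fin N) ℂ) (μ : ℝ)
    (hμpos : 0 < μ) (hμle : ∀ i j, ‖U i j‖ ≤ μ)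
    (g : Fin N → ℂ) (hg : g ≠ 0) (hg1 : ∑ n, ‖g n‖ ^ 2 = 1) :
    -2 * Real.log μ ≤ entropy g + entropy (Uᴴ *ᵥ g) := by
  set L : ℝ := Real.log μ with hL
  set gh : Fin N → ℂ := Uᴴ *ᵥ g with hgh
  have hgh1 : ∑ m, ‖gh m‖ ^ 2 = 1 := by
    rw [hgh, aux_norm_sq U hU g, hg1]
  have hghne : gh ≠ 0 := aux_mulVec_ne U hU g hg
  set sg : Finset (Fin N) := Finset.univ.filter (fun n => g n ≠ 0) with hsg
  set sh : Finset (Fin N) := Finset.univ.filter (fun m => gh m ≠ 0) with hsh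
  set S : ℝ → ℝ := fun θ => ∑ n ∈ sg, Real.exp ((2/(2-θ)) * Real.log (‖g n‖))
    with hSdef
  set Qf : ℝ → ℝ := fun θ => ∑ m ∈ sh, Real.exp ((2/θ) * Real.log (‖gh m‖))
    with hQdef
  -- (a) identification with rpow sums for suitable θ
  have hSrpow : ∀ θ : ℝ, 0 < θ → θ < 2 →
      S θ = ∑ n, ‖g n‖ ^ (2/(2-θ)) := by
    intro θ h0 h2
    have hexp : (0:ℝ) < 2/(2-θ) := by
      have : (0:ℝ) < 2 - θ := by linarith
      positivity
    rw [hSdef]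
    simp only [hsg]
    rw [Finset.sum_filter]
    refine Finset.sum_congr rfl fun n _ => ?_
    by_cases hn : g n = 0
    · simp [hn, Real.zero_rpow (ne_of_gt hexp)]
    · have habs : 0 < ‖g n‖ := norm_pos_iff.mpr hn
      rw [if_pos hn, Real.rpow_def_of_pos habs, mul_comm]
  have hQrpow : ∀ θ : ℝ, 0 < θ → θ < 2 →
      Qf θ = ∑ m, ‖gh m‖ ^ (2/θ) := by
    intro θ h0 h2
    have hexp : (0:ℝ) < 2/θ := by positivity
    rw [hQdef]
    simp only [hsh]
    rw [Finset.sum_filter]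
    refine Finset.sum_congr rfl fun m _ => ?_
    by_cases hm : gh m = 0
    · simp [hm, Real.zero_rpow (ne_of_gt hexp)]
    · have habs : 0 < ‖gh m‖ := norm_pos_iff.mpr hm
      rw [if_pos hm, Real.rpow_def_of_pos habs, mul_comm]
  -- (b) values at 1
  have hS1 : S 1 = 1 := by
    rw [hSrpow 1 one_pos one_lt_two]
    have he : ∑ n, ‖g n‖ ^ ((2:ℝ)/(2-1)) = ∑ n, ‖g n‖ ^ 2 := by
      refine Finset.sum_congr rfl fun n _ => ?_
      rw [show (2:ℝ)/(2-1) = ((2:ℕ):ℝ) by norm_num, Real.rpow_natCast]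
    rw [he, hg1]
  have hQ1 : Qf 1 = 1 := by
    rw [hQrpow 1 one_pos one_lt_two]
    have he : ∑ m, ‖gh m‖ ^ ((2:ℝ)/1) = ∑ m, ‖gh m‖ ^ 2 := by
      refine Finset.sum_congr rfl fun m _ => ?_
      rw [show (2:ℝ)/1 = ((2:ℕ):ℝ) by norm_num, Real.rpow_natCast]
    rw [he, hgh1]
  -- (c) derivatives at 1
  have hSd : HasDerivAt S (-entropy g) 1 := by
    have hterm : ∀ n ∈ sg, HasDerivAt
        (fun θ : ℝ => Real.exp ((2/(2-θ)) * Real.log (‖g n‖)))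
        (‖g n‖ ^ 2 * Real.log (‖g n‖ ^ 2)) 1 := by
      intro n hn
      have hnz : g n ≠ 0 := by
        rw [hsg] at hn; exact (Finset.mem_filter.1 hn).2
      have habs : 0 < ‖g n‖ := norm_pos_iff.mpr hnz
      set c : ℝ := Real.log (‖g n‖) with hc
      have h1 : HasDerivAt (fun θ : ℝ => 2 - θ) (-1) 1 := by
        simpa using (hasDerivAt_id 1).const_sub (2:ℝ)
      have h2 : HasDerivAt (fun θ : ℝ => 2/(2-θ)) 2 1 := by
        have := (hasDerivAt_const 1 (2:ℝ)).fun_div h1 (by norm_num)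
        exact this.congr_deriv (by norm_num)
      have h3 := (h2.mul_const c).exp
      convert h3 using 1
      have e1 : (2:ℝ)/(2-1) * c = Real.log (‖g n‖) * 2 := by
        rw [hc]; ring
      rw [e1, ← Real.rpow_def_of_pos habs,
        show ((2:ℝ)) = ((2:ℕ):ℝ) by norm_num, Real.rpow_natCast]
      rw [Real.log_pow]
      try push_cast
      try ring
    have hsum := HasDerivAt.fun_sum hterm
    have : S = fun θ => ∑ n ∈ sg,
        Real.exp ((2/(2-θ)) * Real.log (‖g n‖)) := hSdef
    rw [entropy]
    have hext : ∑ n ∈ sg, ‖g n‖ ^ 2 * Real.log (‖g n‖ ^ 2)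
        = ∑ n, ‖g n‖ ^ 2 * Real.log (‖g n‖ ^ 2) := by
      rw [hsg]
      refine Finset.sum_filter_of_ne fun n _ h => ?_
      intro hzero
      apply h
      rw [hzero]
      simp
    rw [neg_neg, ← hext]
    exact hsum
  have hQd : HasDerivAt Qf (entropy gh) 1 := by
    have hterm : ∀ m ∈ sh, HasDerivAt
        (fun θ : ℝ => Real.exp ((2/θ) * Real.log (‖gh m‖)))
        (-(‖gh m‖ ^ 2 * Real.log (‖gh m‖ ^ 2))) 1 := by
      intro m hm
      have hnz : gh m ≠ 0 := by
        rw [hsh] at hm; exact (Finset.mem_filter.1 hm).2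
      have habs : 0 < ‖gh m‖ := norm_pos_iff.mpr hnz
      set c : ℝ := Real.log (‖gh m‖) with hc
      have h2 : HasDerivAt (fun θ : ℝ => 2/θ) (-2) 1 := by
        have := (hasDerivAt_const 1 (2:ℝ)).fun_div (hasDerivAt_id 1) (by norm_num)
        exact this.congr_deriv (by norm_num)
      have h3 := (h2.mul_const c).exp
      convert h3 using 1
      have e1 : (2:ℝ)/1 * c = Real.log (‖gh m‖) * 2 := by
        rw [hc]; ring
      rw [e1, ← Real.rpow_def_of_pos habs,
        show ((2:ℝ)) = ((2:ℕ):ℝ) by norm_num, Real.rpow_natCast]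
      rw [Real.log_pow]
      try push_cast
      try ring
    have hsum := HasDerivAt.fun_sum hterm
    rw [entropy]
    have hext : ∑ m ∈ sh, -(‖gh m‖ ^ 2 * Real.log (‖gh m‖ ^ 2))
        = ∑ m, -(‖gh m‖ ^ 2 * Real.log (‖gh m‖ ^ 2)) := by
      rw [hsh]
      refine Finset.sum_filter_of_ne fun m _ h => ?_
      intro hzero
      apply h
      rw [hzero]
      simp
    rw [← Finset.sum_neg_distrib, ← hext]
    exact hsum
  -- (e) φ and its derivative
  set φ : ℝ → ℝ := fun θ => θ/2 * Real.log (Qf θ) - (1 - θ/2) * Real.log (S θ)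
    - (1 - θ) * L with hφdef
  have hφd : HasDerivAt φ ((entropy g + entropy gh)/2 + L) 1 := by
    have h1 : HasDerivAt (fun θ : ℝ => θ/2) (1/2) 1 := (hasDerivAt_id 1).div_const 2
    have h2 : HasDerivAt (fun θ : ℝ => Real.log (Qf θ)) (entropy gh / Qf 1) 1 :=
      hQd.log (by rw [hQ1]; norm_num)
    have h3 : HasDerivAt (fun θ : ℝ => Real.log (S θ)) ((-entropy g) / S 1) 1 :=
      hSd.log (by rw [hS1]; norm_num)
    have h4 : HasDerivAt (fun θ : ℝ => 1 - θ/2) (-(1/2)) 1 := by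
      simpa using h1.const_sub (1:ℝ)
    have h5 : HasDerivAt (fun θ : ℝ => (1 - θ) * L) (-L) 1 := by
      have := ((hasDerivAt_id 1).const_sub (1:ℝ)).mul_const L
      exact this.congr_deriv (by ring)
    have h6 := ((h1.mul h2).sub (h4.mul h3)).sub h5
    refine h6.congr_deriv ?_
    rw [hQ1, hS1, Real.log_one]
    ring
  -- (f) value at 1
  have hφ1 : φ 1 = 0 := by
    rw [hφdef]
    simp [hQ1, hS1]
  -- (g) nonpositivity on (0,1)
  have hφle : ∀ θ : ℝ, 0 < θ → θ < 1 → φ θ ≤ 0 := by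
    intro θ h0 h1
    have h2 : θ < 2 := by linarith
    have hkey := aux_RT U hU μ hμpos hμle g hg θ h0 h1 (Qf θ) (S θ)
      (hQrpow θ h0 h2) (hSrpow θ h0 h2)
    have hQpos : 0 < Qf θ := by
      rw [hQdef]
      obtain ⟨m0, hm0⟩ := Function.ne_iff.1 hghne
      refine Finset.sum_pos' (fun i _ => (Real.exp_pos _).le) ⟨m0, ?_, Real.exp_pos _⟩
      simpa [hsh] using hm0
    have hSpos : 0 < S θ := by
      rw [hSdef]
      obtain ⟨n0, hn0⟩ := Function.ne_iff.1 hg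
      refine Finset.sum_pos' (fun i _ => (Real.exp_pos _).le) ⟨n0, ?_, Real.exp_pos _⟩
      simpa [hsg] using hn0
    have hlog := Real.log_le_log (by positivity) hkey
    rw [Real.log_mul (Real.exp_ne_zero _) (ne_of_gt hQpos), Real.log_exp,
      Real.log_rpow (mul_pos hQpos hSpos),
      Real.log_mul (ne_of_gt hQpos) (ne_of_gt hSpos)] at hlog
    rw [hφdef]
    simp only []
    nlinarith [hlog]
  -- (h) conclude from one-sided derivative
  have hD : 0 ≤ (entropy g + entropy gh)/2 + L := by
    have hslope := hasDerivAt_iff_tendsto_slope.1 hφd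
    have hmono : nhdsWithin (1:ℝ) (Set.Iio 1) ≤ nhdsWithin (1:ℝ) {(1:ℝ)}ᶜ :=
      nhdsWithin_mono _ (fun x hx => ne_of_lt hx)
    refine ge_of_tendsto (hslope.mono_left hmono) ?_
    filter_upwards [Ioo_mem_nhdsLT_of_mem (Set.mem_Ioc.2 ⟨one_pos, le_refl 1⟩)] with θ hθ
    obtain ⟨h0, h1⟩ := hθ
    rw [slope_def_field]
    rw [div_nonneg_iff]
    right
    constructor
    · have := hφle θ h0 h1
      rw [hφ1]
      linarith
    · linarith
  linarith [hD]
/-- Entropic (Maassen–Uffink) uncertainty principle for a unitary transform. -/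
theorem stmt2 {N : ℕ} (U : Matrix (Fin N) (Fin N) ℂ)
    (hU : U ∈ Matrix.unitaryGroup (Fin N) ℂ)
    (μ : ℝ) (hμ : μ = ⨆ q : Fin N × Fin N, ‖U q.1 q.2‖)
    (f : Fin N → ℂ) (hf : f ≠ 0) :
    -2 * Real.log μ ≤
      entropy (fun n => f n / (lpnorm 2 f : ℂ)) +
        entropy (fun n => (Uᴴ.mulVec f) n / (lpnorm 2 (Uᴴ.mulVec f) : ℂ)) := by
  obtain ⟨n0, hn0⟩ := Function.ne_iff.1 hf
  have hn0' : f n0 ≠ 0 := by simpa using hn0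
  have hμpos : 0 < μ := aux_mu_pos U hU μ hμ n0
  have hμle : ∀ i j, ‖U i j‖ ≤ μ := aux_mu_le U μ hμ
  have hT : ∑ i, ‖f i‖ ^ (2:ℝ) = ∑ i, ‖f i‖ ^ 2 :=
    Finset.sum_congr rfl fun i _ => by
      rw [show (2:ℝ) = ((2:ℕ):ℝ) by norm_num, Real.rpow_natCast]
  have hTpos : 0 < ∑ i, ‖f i‖ ^ 2 :=
    Finset.sum_pos' (fun i _ => sq_nonneg _)
      ⟨n0, Finset.mem_univ _, pow_pos (norm_pos_iff.mpr hn0') 2⟩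
  set c : ℝ := lpnorm 2 f with hc
  have hcval : c = (∑ i, ‖f i‖ ^ 2) ^ ((1:ℝ)/2) := by
    rw [hc, lpnorm, hT]
  have hcpos : 0 < c := by
    rw [hcval]
    positivity
  have hcsq : c ^ 2 = ∑ i, ‖f i‖ ^ 2 := by
    rw [hcval, ← Real.rpow_natCast ((∑ i, ‖f i‖ ^ 2) ^ ((1:ℝ)/2)) 2,
      ← Real.rpow_mul (le_of_lt hTpos)]
    norm_num
  have hcC : (c : ℂ) ≠ 0 := by exact_mod_cast ne_of_gt hcpos
  set g : Fin N → ℂ := fun n => f n / (c:ℂ) with hgdef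
  have hgne : g ≠ 0 := by
    intro h
    have := congrFun h n0
    rw [hgdef] at this
    simp only [Pi.zero_apply, div_eq_zero_iff] at this
    rcases this with h' | h'
    · exact hn0' h'
    · exact hcC h'
  have habsg : ∀ n, ‖g n‖ = ‖f n‖ / c := by
    intro n
    rw [hgdef]
    simp only [norm_div, Complex.norm_real, Real.norm_eq_abs, abs_of_pos hcpos]
  have hg1 : ∑ n, ‖g n‖ ^ 2 = 1 := by
    simp only [habsg, div_pow]
    rw [← Finset.sum_div, ← hcsq, div_self (by positivity)]
  have hsmul : g = (c:ℂ)⁻¹ • f := by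
    funext n
    rw [hgdef]
    simp [div_eq_inv_mul]
  have hgh : Uᴴ *ᵥ g = fun m => (Uᴴ *ᵥ f) m / (c:ℂ) := by
    funext m
    rw [hsmul, Matrix.mulVec_smul]
    simp [div_eq_inv_mul]
  have hlp : lpnorm 2 (Uᴴ *ᵥ f) = c := by
    rw [lpnorm, hcval]
    congr 1
    rw [← aux_norm_sq U hU f]
    refine Finset.sum_congr rfl fun m _ => ?_
    rw [show (2:ℝ) = ((2:ℕ):ℝ) by norm_num, Real.rpow_natCast]
  have harg2 : (fun n => (Uᴴ.mulVec f) n / (lpnorm 2 (Uᴴ.mulVec f) : ℂ)) = Uᴴ *ᵥ g := by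
    rw [hgh, hlp]
  rw [harg2]
  exact aux_main U hU μ hμpos hμle g hgne hg1
end

section
/- Let U be a unitary N×N matrix with μ = max_{i,j} |U_{ij}|, and f̂ = U* f. For p, q with 1/p + 1/q = 1 and 1 ≤ p ≤ 2, ‖f̂‖_q ≤ μ^{1 - 2/q} · ‖f‖_p for all f in C^N. -/
open Finset Matrix ENNReal Complex

noncomputable def rtPhi {N : ℕ} (r : ℝ) (v : Fin N → ℂ) (z : ℂ) (i : Fin N) : ℂ :=
  if v i = 0 then 0 else
    ((norm (v i) : ℂ) ^ ((r : ℂ) * (1 - z / 2))) * (v i / (norm (v i) : ℂ))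

lemma rtPhi_diff {N : ℕ} (r : ℝ) (v : Fin N → ℂ) (i : Fin N) :
    Differentiable ℂ (fun z => rtPhi r v z i) := by
  unfold rtPhi
  by_cases h : v i = 0
  · simp [h]
  · simp only [h, if_false]
    apply Differentiable.mul _ (differentiable_const _)
    apply Differentiable.const_cpow
    · exact ((differentiable_const _).sub ((differentiable_id).div_const _)).const_mul _
    · left
      simpa using (norm_ne_zero_iff.mpr h)

lemma rtPhi_re (r : ℝ) (z : ℂ) : ((r : ℂ) * (1 - z / 2)).re = r * (1 - z.re / 2) := by
  simp [Complex.mul_re, Complex.sub_re, Complex.div_re]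

lemma rtPhi_abs {N : ℕ} (r : ℝ) (v : Fin N → ℂ) (z : ℂ) (i : Fin N)
    (hr : 0 < r) (hz : z.re ≤ 1) :
    norm (rtPhi r v z i) = norm (v i) ^ (r * (1 - z.re / 2)) := by
  unfold rtPhi
  by_cases h : v i = 0
  · simp only [h, if_true, map_zero, norm_zero]
    rw [Real.zero_rpow]
    have : (0:ℝ) < 1 - z.re / 2 := by linarith
    positivity
  · have habs : 0 < norm (v i) := norm_pos_iff.mpr h
    simp only [h, if_false]
    rw [norm_mul, norm_div, Complex.norm_real, Real.norm_eq_abs, _root_.abs_of_pos habs,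
      div_self (ne_of_gt habs), mul_one, Complex.norm_cpow_eq_rpow_re_of_pos habs,
      rtPhi_re]

lemma rtPhi_value {N : ℕ} (r : ℝ) (v : Fin N → ℂ) (θ : ℝ) (i : Fin N)
    (h : r * (1 - θ / 2) = 1) :
    rtPhi r v (θ : ℂ) i = v i := by
  unfold rtPhi
  by_cases h0 : v i = 0
  · simp [h0]
  · have habs : (norm (v i) : ℂ) ≠ 0 := by
      simpa using norm_ne_zero_iff.mpr h0
    have hexp : (r : ℂ) * (1 - (θ:ℂ) / 2) = 1 := by
      have := congrArg (fun x : ℝ => (x : ℂ)) h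
      push_cast at this
      simpa using this
    simp only [h0, if_false, hexp, Complex.cpow_one]
    field_simp

lemma rpow_bound {b e e1 e2 : ℝ} (hb : 0 ≤ b) (h1 : 0 < e1) (h2 : e1 ≤ e) (h3 : e ≤ e2) :
    b ^ e ≤ b ^ e1 + b ^ e2 := by
  rcases eq_or_lt_of_le hb with hb0 | hb0
  · rw [← hb0, Real.zero_rpow (by linarith)]
    positivity
  rcases le_total b 1 with hb1 | hb1
  · have := Real.rpow_le_rpow_of_exponent_ge hb0 hb1 h2
    have h4 : (0:ℝ) ≤ b ^ e2 := Real.rpow_nonneg hb0.le _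
    linarith
  · have := Real.rpow_le_rpow_of_exponent_le hb1 h3
    have h4 : (0:ℝ) ≤ b ^ e1 := Real.rpow_nonneg hb0.le _
    linarith

/-- Finite-dimensional Riesz–Thorin style interpolation for a matrix bilinear form. -/
lemma rtInterp {N : ℕ} (A : Matrix (Fin N) (Fin N) ℂ) (μ : ℝ) (hμ0 : 0 ≤ μ)
    (hA : ∀ k j, norm (A k j) ≤ μ)
    (hA2 : ∀ v : Fin N → ℂ,
      ∑ k, norm (A.mulVec v k) ^ 2 ≤ ∑ j, norm (v j) ^ 2)
    (pr qr : ℝ) (hpr1 : 1 ≤ pr) (hqr2 : 2 ≤ qr) (hpq : 1/pr + 1/qr = 1)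
    (g h : Fin N → ℂ) :
    norm (∑ k, A.mulVec g k * h k) ≤
      μ ^ (1 - 2/qr) * (∑ j, norm (g j) ^ pr) ^ (1/pr)
        * (∑ k, norm (h k) ^ pr) ^ (1/pr) := by
  have hpr0 : 0 < pr := lt_of_lt_of_le one_pos hpr1
  have hqr0 : 0 < qr := lt_of_lt_of_le two_pos hqr2
  set θ : ℝ := 2/qr with hθ
  have hθ0 : 0 < θ := by positivity
  have hθ1 : θ ≤ 1 := by rw [hθ, div_le_one hqr0]; exact hqr2
  have h2q : θ/2 = 1/qr := by rw [hθ]; ring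
  have hinv : 1 - θ/2 = 1/pr := by rw [h2q]; linarith
  have hkey : pr * (1 - θ/2) = 1 := by
    rw [hinv]; field_simp
  set a' : ℝ := ∑ j, norm (g j) ^ pr with ha'def
  set b' : ℝ := ∑ k, norm (h k) ^ pr with hb'def
  have ha'0 : 0 ≤ a' := Finset.sum_nonneg fun i _ => Real.rpow_nonneg (norm_nonneg _) _
  have hb'0 : 0 ≤ b' := Finset.sum_nonneg fun i _ => Real.rpow_nonneg (norm_nonneg _) _
  set G : ℂ → ℂ := fun z => ∑ k, ∑ j, A k j * rtPhi pr g z j * rtPhi pr h z k with hGdef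
  have hGdiff : Differentiable ℂ G := by
    apply Differentiable.fun_sum
    intro k _
    apply Differentiable.fun_sum
    intro j _
    exact ((differentiable_const _).mul (rtPhi_diff pr g j)).mul (rtPhi_diff pr h k)
  -- generic bound on the strip
  have hGabs : ∀ z : ℂ, z.re ≤ 1 → norm (G z) ≤
      ∑ k, ∑ j, norm (A k j)
        * norm (g j) ^ (pr * (1 - z.re/2))
        * norm (h k) ^ (pr * (1 - z.re/2)) := by
    intro z hz
    refine le_trans (norm_sum_le _ _) ?_
    apply Finset.sum_le_sum
    intro k _
    refine le_trans (norm_sum_le _ _) ?_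
    apply Finset.sum_le_sum
    intro j _
    rw [norm_mul, norm_mul, rtPhi_abs pr g z j hpr0 hz,
      rtPhi_abs pr h z k hpr0 hz]
  have hsq : ∀ x : ℝ, 0 ≤ x → (x ^ (pr/2)) ^ 2 = x ^ pr := by
    intro x hx
    rw [← Real.rpow_natCast (x ^ (pr/2)) 2, ← Real.rpow_mul hx]
    norm_num
  -- bound on the line re = 0
  have hline0 : ∀ z : ℂ, z.re = 0 → norm (G z) ≤ μ * a' * b' := by
    intro z hz
    have h1 := hGabs z (by rw [hz]; norm_num)
    rw [hz] at h1
    have he : pr * (1 - (0:ℝ)/2) = pr := by ring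
    rw [he] at h1
    refine h1.trans ?_
    have step : ∀ k, ∑ j, norm (A k j) * norm (g j) ^ pr
        * norm (h k) ^ pr ≤ (μ * a') * norm (h k) ^ pr := by
      intro k
      rw [← Finset.sum_mul, ha'def, Finset.mul_sum]
      apply mul_le_mul_of_nonneg_right _ (Real.rpow_nonneg (norm_nonneg _) _)
      apply Finset.sum_le_sum
      intro j _
      exact mul_le_mul_of_nonneg_right (hA k j) (Real.rpow_nonneg (norm_nonneg _) _)
    refine (Finset.sum_le_sum fun k _ => step k).trans ?_
    rw [← Finset.mul_sum, ← hb'def, mul_assoc]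
  -- bound on the line re = 1
  have hline1 : ∀ z : ℂ, z.re = 1 → norm (G z) ≤ a' ^ (1/2:ℝ) * b' ^ (1/2:ℝ) := by
    intro z hz
    have he : pr * (1 - z.re/2) = pr/2 := by rw [hz]; ring
    have hG1 : G z = ∑ k, (A.mulVec fun j => rtPhi pr g z j) k * rtPhi pr h z k := by
      rw [hGdef]
      refine Finset.sum_congr rfl fun k _ => ?_
      simp [Matrix.mulVec, dotProduct, Finset.sum_mul]
    rw [hG1]
    set u : Fin N → ℝ := fun k => norm ((A.mulVec fun j => rtPhi pr g z j) k) with hu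
    set w : Fin N → ℝ := fun k => norm (rtPhi pr h z k) with hw
    have hstep : norm (∑ k, (A.mulVec fun j => rtPhi pr g z j) k * rtPhi pr h z k)
        ≤ ∑ k, u k * w k := by
      refine le_trans (norm_sum_le _ _) ?_
      refine Finset.sum_le_sum fun k _ => ?_
      rw [norm_mul]
    refine hstep.trans ?_
    have hu2 : ∑ k, u k ^ 2 ≤ a' := by
      refine (hA2 _).trans ?_
      rw [ha'def]
      refine le_of_eq (Finset.sum_congr rfl fun j _ => ?_)
      rw [rtPhi_abs pr g z j hpr0 (le_of_eq hz), he, hsq _ (norm_nonneg _)]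
    have hw2 : ∑ k, w k ^ 2 = b' := by
      rw [hb'def]
      refine Finset.sum_congr rfl fun k _ => ?_
      rw [hw]
      simp only []
      rw [rtPhi_abs pr h z k hpr0 (le_of_eq hz), he, hsq _ (norm_nonneg _)]
    have hcs := Finset.sum_mul_sq_le_sq_mul_sq Finset.univ u w
    have huw0 : 0 ≤ ∑ k, u k * w k :=
      Finset.sum_nonneg fun k _ => mul_nonneg (norm_nonneg _) (norm_nonneg _)
    have hub : (∑ k, u k * w k) ^ 2 ≤ a' * b' := by
      refine hcs.trans ?_
      rw [hw2]
      exact mul_le_mul_of_nonneg_right hu2 (hw2 ▸ Finset.sum_nonneg fun k _ => sq_nonneg _)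
    have := Real.sqrt_le_sqrt hub
    rw [Real.sqrt_sq huw0] at this
    refine this.trans ?_
    rw [Real.sqrt_eq_rpow, Real.mul_rpow ha'0 hb'0]
  -- three lines
  have hmem : (θ:ℂ) ∈ Complex.HadamardThreeLines.verticalClosedStrip 0 1 := by
    simp only [Complex.HadamardThreeLines.verticalClosedStrip, Set.mem_preimage,
      Complex.ofReal_re, Set.mem_Icc]
    exact ⟨hθ0.le, hθ1⟩
  have hbdd : BddAbove ((norm ∘ G) '' (Complex.HadamardThreeLines.verticalClosedStrip 0 1)) := by
    refine ⟨∑ k, ∑ j, μ * (norm (g j) ^ (pr/2) + norm (g j) ^ pr)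
      * (norm (h k) ^ (pr/2) + norm (h k) ^ pr), ?_⟩
    rintro x ⟨z, hz, rfl⟩
    have hz' : z.re ∈ Set.Icc (0:ℝ) 1 := hz
    simp only [Function.comp]
    refine (hGabs z hz'.2).trans ?_
    refine Finset.sum_le_sum fun k _ => Finset.sum_le_sum fun j _ => ?_
    have e1 : pr/2 ≤ pr * (1 - z.re/2) := by nlinarith [hz'.1, hz'.2]
    have e2 : pr * (1 - z.re/2) ≤ pr := by nlinarith [hz'.1]
    have B1 := rpow_bound (norm_nonneg (g j)) (by positivity : (0:ℝ) < pr/2) e1 e2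
    have B2 := rpow_bound (norm_nonneg (h k)) (by positivity : (0:ℝ) < pr/2) e1 e2
    refine mul_le_mul (mul_le_mul (hA k j) B1
      (Real.rpow_nonneg (norm_nonneg _) _) hμ0) B2
      (Real.rpow_nonneg (norm_nonneg _) _) ?_
    have := norm_nonneg (g j)
    positivity
  have h3 := Complex.HadamardThreeLines.norm_le_interp_of_mem_verticalClosedStrip₀₁' G hmem
    hGdiff.diffContOnCl hbdd
    (fun z hz => by exact hline0 z (Set.mem_singleton_iff.mp hz))
    (fun z hz => by exact hline1 z (Set.mem_singleton_iff.mp hz))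
  rw [Complex.ofReal_re] at h3
  have hval : G (θ:ℂ) = ∑ k, A.mulVec g k * h k := by
    rw [hGdef]
    simp only [rtPhi_value _ _ _ _ hkey]
    refine Finset.sum_congr rfl fun k _ => ?_
    simp [Matrix.mulVec, dotProduct, Finset.sum_mul]
  rw [hval] at h3
  refine h3.trans ?_
  have hpr_ne : (1:ℝ)/pr ≠ 0 := by positivity
  have hsum : (1 - θ) + (1/2) * θ = 1/pr := by rw [← hinv]; ring
  have e1 : a' ^ ((1:ℝ)/pr) = a' ^ (1-θ) * a' ^ ((1/2:ℝ)*θ) := by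
    rw [← Real.rpow_add' ha'0 (by rw [hsum]; exact hpr_ne), hsum]
  have e2 : b' ^ ((1:ℝ)/pr) = b' ^ (1-θ) * b' ^ ((1/2:ℝ)*θ) := by
    rw [← Real.rpow_add' hb'0 (by rw [hsum]; exact hpr_ne), hsum]
  rw [Real.mul_rpow (mul_nonneg hμ0 ha'0) hb'0, Real.mul_rpow hμ0 ha'0,
    Real.mul_rpow (Real.rpow_nonneg ha'0 _) (Real.rpow_nonneg hb'0 _),
    ← Real.rpow_mul ha'0, ← Real.rpow_mul hb'0]
  rw [show (1:ℝ) - 2/qr = 1 - θ from rfl]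
  rw [e1, e2]
  ring_nf
  exact le_refl _

noncomputable def lpnormE {ι : Type*} [Fintype ι] (p : ℝ≥0∞) (f : ι → ℂ) : ℝ :=
  if p = ⊤ then ⨆ i, ‖f i‖
  else (∑ i, ‖f i‖ ^ p.toReal) ^ (1 / p.toReal)

lemma lpnormE_top {ι : Type*} [Fintype ι] (f : ι → ℂ) :
    lpnormE ⊤ f = ⨆ i, norm (f i) := if_pos rfl

lemma lpnormE_ne_top {ι : Type*} [Fintype ι] {p : ℝ≥0∞} (hp : p ≠ ⊤) (f : ι → ℂ) :
    lpnormE p f = (∑ i, norm (f i) ^ p.toReal) ^ (1 / p.toReal) := if_neg hp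

/-- Graph Hausdorff–Young inequality, forward direction. -/
theorem stmt4 {N : ℕ} (U : Matrix (Fin N) (Fin N) ℂ)
    (hU : U ∈ Matrix.unitaryGroup (Fin N) ℂ)
    (μ : ℝ) (hμ : μ = ⨆ q : Fin N × Fin N, ‖U q.1 q.2‖)
    (p q : ℝ≥0∞) (hpq : 1 / p + 1 / q = 1) (hp1 : 1 ≤ p) (hp2 : p ≤ 2)
    (f : Fin N → ℂ) :
    lpnormE q (Uᴴ.mulVec f) ≤ μ ^ (1 - 2 / q.toReal) * lpnormE p f := by
  have hμ0 : 0 ≤ μ := by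
    rcases isEmpty_or_nonempty (Fin N × Fin N) with hE | hNE
    · rw [hμ, iSup, Set.range_eq_empty, Real.sSup_empty]
    · obtain ⟨x⟩ := hNE
      rw [hμ]
      exact le_trans (norm_nonneg (U x.1 x.2))
        (le_ciSup (f := fun q : Fin N × Fin N => norm (U q.1 q.2))
          (Set.Finite.bddAbove (Set.finite_range _)) x)
  have hent : ∀ j k : Fin N, norm (U j k) ≤ μ := by
    intro j k
    rw [hμ]
    exact le_ciSup (f := fun q : Fin N × Fin N => norm (U q.1 q.2))
      (Set.Finite.bddAbove (Set.finite_range _)) (j, k)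
  have hentA : ∀ k j : Fin N, norm (Uᴴ k j) ≤ μ := by
    intro k j
    rw [Matrix.conjTranspose_apply]
    rw [show star (U j k) = (starRingEnd ℂ) (U j k) from rfl, Complex.norm_conj]
    exact hent j k
  by_cases hq : q = ⊤
  · subst hq
    have hp : p = 1 := by
      have h1 : 1/p + 0 = 1 := by simpa using hpq
      rw [add_zero, one_div] at h1
      exact ENNReal.inv_eq_one.mp h1
    subst hp
    rw [lpnormE_top, lpnormE_ne_top ENNReal.one_ne_top, ENNReal.toReal_top,
      _root_.div_zero, sub_zero, Real.rpow_one, ENNReal.toReal_one,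
      show (1:ℝ)/1 = 1 by norm_num, Real.rpow_one]
    rcases isEmpty_or_nonempty (Fin N) with hE | hNE
    · rw [iSup, Set.range_eq_empty, Real.sSup_empty]
      have h2 : (∑ i, norm (f i) ^ (1:ℝ)) = 0 := by
        rw [Finset.univ_eq_empty, Finset.sum_empty]
      rw [h2, mul_zero]
    · apply ciSup_le
      intro k
      have hb : ∀ i : Fin N, norm (f i) ^ (1:ℝ) = norm (f i) := fun i =>
        Real.rpow_one _
      calc norm (Uᴴ.mulVec f k)
          ≤ ∑ j, norm (Uᴴ k j * f j) := by
            rw [Matrix.mulVec, dotProduct]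
            exact norm_sum_le _ _
        _ ≤ ∑ j, μ * norm (f j) := by
            refine Finset.sum_le_sum fun j _ => ?_
            rw [norm_mul]
            exact mul_le_mul_of_nonneg_right (hentA k j) (norm_nonneg _)
        _ = μ * ∑ j, norm (f j) ^ (1:ℝ) := by
            rw [Finset.mul_sum]
            exact Finset.sum_congr rfl fun j _ => by rw [hb j]
  · have hptop : p ≠ ⊤ := ne_top_of_le_ne_top ENNReal.ofNat_ne_top hp2
    have hp0 : p ≠ 0 := (zero_lt_one.trans_le hp1).ne'
    have hq0 : q ≠ 0 := by
      intro h0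
      rw [h0, ENNReal.div_zero one_ne_zero] at hpq
      simp at hpq
    set pr := p.toReal with hprdef
    set qr := q.toReal with hqrdef
    have hpr0 : 0 < pr := ENNReal.toReal_pos hp0 hptop
    have hqr0 : 0 < qr := ENNReal.toReal_pos hq0 hq
    have hpr1 : 1 ≤ pr := by
      have := ENNReal.toReal_mono hptop hp1
      simpa using this
    have hpr2 : pr ≤ 2 := by
      have := ENNReal.toReal_mono ENNReal.ofNat_ne_top hp2
      simpa using this
    have hreal : 1/pr + 1/qr = 1 := by
      have h1p : (1/p) ≠ ⊤ := by simp [one_div, hp0]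
      have h1q : (1/q) ≠ ⊤ := by simp [one_div, hq0]
      have := congrArg ENNReal.toReal hpq
      rw [ENNReal.toReal_add h1p h1q] at this
      simpa [one_div, ENNReal.toReal_inv] using this
    have hqr2 : 2 ≤ qr := by
      have h1 : 1/2 ≤ 1/pr := one_div_le_one_div_of_le hpr0 hpr2
      have h2 : 1/qr ≤ 1/2 := by linarith
      have h3 := (div_le_div_iff₀ hqr0 two_pos).mp h2
      linarith
    have hA2 : ∀ v : Fin N → ℂ,
        ∑ k, norm (Uᴴ.mulVec v k) ^ 2 ≤ ∑ j, norm (v j) ^ 2 := by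
      intro v
      have hnorm : ∀ w : Fin N → ℂ, ∑ k, norm (w k) ^ 2 = (star w ⬝ᵥ w).re := by
        intro w
        rw [dotProduct, Complex.re_sum]
        refine Finset.sum_congr rfl fun i _ => ?_
        have h2 : star w i * w i = ((norm (w i) ^ 2 : ℝ) : ℂ) := by
          rw [Complex.sq_norm]
          simp only [Pi.star_apply]
          rw [show star (w i) = (starRingEnd ℂ) (w i) from rfl, mul_comm,
            Complex.mul_conj]
        rw [h2, Complex.ofReal_re]
      rw [hnorm (Uᴴ.mulVec v), hnorm v]
      have hUU : U * Uᴴ = 1 := by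
        have := Matrix.mem_unitaryGroup_iff.mp hU
        rwa [Matrix.star_eq_conjTranspose] at this
      have h3 : star (Uᴴ.mulVec v) ⬝ᵥ (Uᴴ.mulVec v) = star v ⬝ᵥ v := by
        rw [Matrix.star_mulVec, Matrix.conjTranspose_conjTranspose,
          dotProduct_mulVec, Matrix.vecMul_vecMul, hUU, Matrix.vecMul_one]
      rw [h3]
    set w : Fin N → ℂ := Uᴴ.mulVec f with hwdef
    set S : ℝ := ∑ k, norm (w k) ^ qr with hSdef
    have hS0 : 0 ≤ S :=
      Finset.sum_nonneg fun k _ => Real.rpow_nonneg (norm_nonneg _) _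
    set h : Fin N → ℂ :=
      fun k => (starRingEnd ℂ) (w k) * ((norm (w k) : ℂ) ^ ((qr - 2 : ℝ) : ℂ))
      with hhdef
    have hqrpr : (qr - 1) * pr = qr := by
      have hmul : qr + pr = pr * qr := by
        field_simp at hreal
        linarith
      nlinarith [hmul]
    have hT : ∑ k, w k * h k = (S : ℂ) := by
      rw [hSdef, Complex.ofReal_sum]
      refine Finset.sum_congr rfl fun k _ => ?_
      by_cases h0 : w k = 0
      · simp only [hhdef, h0, map_zero, norm_zero, zero_mul, mul_zero]
        rw [Real.zero_rpow (ne_of_gt hqr0), Complex.ofReal_zero]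
      · have hx : 0 < norm (w k) := norm_pos_iff.mpr h0
        simp only [hhdef]
        have hr : norm (w k) ^ (2:ℕ) * norm (w k) ^ (qr-2)
            = norm (w k) ^ qr := by
          rw [← Real.rpow_natCast (norm (w k)) 2, ← Real.rpow_add hx]
          norm_num
        rw [← mul_assoc, Complex.mul_conj, ← Complex.ofReal_cpow hx.le,
          ← Complex.sq_norm, ← Complex.ofReal_mul, hr]
    have hhabs : ∀ k, norm (h k) ^ pr = norm (w k) ^ qr := by
      intro k
      by_cases h0 : w k = 0
      · simp only [hhdef, h0, map_zero, norm_zero, zero_mul]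
        rw [Real.zero_rpow (ne_of_gt hpr0), Real.zero_rpow (ne_of_gt hqr0)]
      · have hx : 0 < norm (w k) := norm_pos_iff.mpr h0
        have habs : norm (h k) = norm (w k) ^ (qr - 1) := by
          simp only [hhdef]
          rw [norm_mul, Complex.norm_conj, Complex.norm_cpow_eq_rpow_re_of_pos hx,
            Complex.ofReal_re]
          nth_rewrite 1 [← Real.rpow_one (norm (w k))]
          rw [← Real.rpow_add hx]
          ring_nf
        rw [habs, ← Real.rpow_mul (norm_nonneg _), hqrpr]
    have hmain := rtInterp Uᴴ μ hμ0 hentA hA2 pr qr hpr1 hqr2 hreal f h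
    rw [← hwdef] at hmain
    rw [hT, Complex.norm_real, Real.norm_eq_abs, _root_.abs_of_nonneg hS0] at hmain
    have hsum_h : ∑ k, norm (h k) ^ pr = S := by
      rw [hSdef]
      exact Finset.sum_congr rfl fun k _ => hhabs k
    rw [hsum_h] at hmain
    rw [lpnormE, if_neg hq, lpnormE, if_neg hptop, ← hSdef]
    by_cases hSz : S = 0
    · rw [hSz, Real.zero_rpow (by positivity)]
      exact mul_nonneg (Real.rpow_nonneg hμ0 _)
        (Real.rpow_nonneg (Finset.sum_nonneg fun i _ =>
          Real.rpow_nonneg (norm_nonneg _) _) _)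
    · have hSpos : 0 < S := lt_of_le_of_ne hS0 (Ne.symm hSz)
      have hps : 0 < S ^ (1/pr) := Real.rpow_pos_of_pos hSpos _
      rw [← mul_le_mul_iff_left₀ hps]
      have hSS : S ^ (1/qr) * S ^ (1/pr) = S := by
        rw [← Real.rpow_add hSpos, show 1/qr + 1/pr = 1 by linarith]
        exact Real.rpow_one S
      rw [hSS]
      exact hmain
end

section
/- Let U be a unitary N×N matrix with μ = max_{i,j} |U_{ij}|, and f̂ = U* f. For p, q with 1/p + 1/q = 1 and 2 ≤ p ≤ ∞, ‖f̂‖_q ≥ μ^{1 - 2/q} · ‖f‖_p for all f in C^N. -/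
open Finset Matrix ENNReal

/-- Parseval for unitary matrices. -/
lemma parsevalHY {N : ℕ} (U : Matrix (Fin N) (Fin N) ℂ)
    (hU : U ∈ Matrix.unitaryGroup (Fin N) ℂ) (x : Fin N → ℂ) :
    ∑ j, ‖U.mulVec x j‖ ^ (2:ℕ) = ∑ k, ‖x k‖ ^ (2:ℕ) := by
  have key : star (U.mulVec x) ⬝ᵥ (U.mulVec x) = star x ⬝ᵥ x := by
    rw [Matrix.star_mulVec, dotProduct_mulVec, Matrix.vecMul_vecMul,
      ← Matrix.star_eq_conjTranspose, hU.1, Matrix.vecMul_one]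
  have h2 : ((∑ j, ‖U.mulVec x j‖ ^ (2:ℕ) : ℝ) : ℂ)
      = ((∑ k, ‖x k‖ ^ (2:ℕ) : ℝ) : ℂ) := by
    push_cast
    simpa [dotProduct, Pi.star_apply, RCLike.star_def, Complex.mul_conj,
      ← Complex.sq_norm, mul_comm] using key
  exact_mod_cast h2

/-- Analytic dilation of a complex number, used in the three-lines argument. -/
noncomputable def dilHY (s : ℝ) (a : ℂ) (w : ℂ) : ℂ :=
  if a = 0 then 0
  else (a / (‖a‖ : ℂ)) * Complex.exp ((Real.log (‖a‖) : ℂ) * ((s : ℂ) * (1 + w)))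

lemma dilHY_differentiable (s : ℝ) (a : ℂ) : Differentiable ℂ (dilHY s a) := by
  unfold dilHY
  by_cases h : a = 0
  · simpa [h] using differentiable_const (0:ℂ)
  · simp only [h, if_false]
    exact (Complex.differentiable_exp.comp
      ((differentiable_const _).mul ((differentiable_const _).mul
        ((differentiable_const _).add differentiable_id)))).const_mul _

lemma dilHY_abs {s : ℝ} (hs : 0 < s) (a : ℂ) {w : ℂ} (hw : 0 ≤ w.re) :
    ‖dilHY s a w‖ = ‖a‖ ^ (s * (1 + w.re)) := by
  unfold dilHY
  by_cases h : a = 0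
  · have : s * (1 + w.re) ≠ 0 := by positivity
    simp [if_pos h, h, Real.zero_rpow this]
  · rw [if_neg h]
    have ha : (0:ℝ) < ‖a‖ := by
      simpa [norm_pos_iff] using h
    rw [norm_mul, norm_div, Complex.norm_real, Real.norm_eq_abs, abs_of_pos ha, div_self (ne_of_gt ha), one_mul,
      Complex.norm_exp]
    have hre : ((Real.log (‖a‖) : ℂ) * ((s : ℂ) * (1 + w))).re
        = Real.log (‖a‖) * (s * (1 + w.re)) := by
      simp [Complex.re_ofReal_mul, Complex.mul_re, Complex.ofReal_im]
    rw [hre, ← Real.rpow_def_of_pos ha]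

lemma dilHY_of_eq_one {s : ℝ} {t : ℝ} (hst : s * (1 + t) = 1) (a : ℂ) :
    dilHY s a (t : ℂ) = a := by
  unfold dilHY
  by_cases h : a = 0
  · simp [h]
  · rw [if_neg h]
    have ha : (0:ℝ) < ‖a‖ := by
      simpa [norm_pos_iff] using h
    have hc : ((s : ℂ) * (1 + (t:ℂ))) = 1 := by
      have : (((s * (1 + t) : ℝ)) : ℂ) = ((1:ℝ) : ℂ) := by rw [hst]
      push_cast at this
      linear_combination this
    rw [hc, mul_one, ← Complex.ofReal_exp, Real.exp_log ha,
      div_mul_cancel₀]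
    exact_mod_cast ne_of_gt ha

theorem hy_forward {N : ℕ} (U : Matrix (Fin N) (Fin N) ℂ)
    (hU : U ∈ Matrix.unitaryGroup (Fin N) ℂ) (μ : ℝ) (hμpos : 0 < μ)
    (hμb : ∀ j k, ‖U j k‖ ≤ μ)
    (p q : ℝ) (hq1 : 1 < q) (hq2 : q ≤ 2) (hpq : 1/p + 1/q = 1)
    (g : Fin N → ℂ) :
    (∑ j, ‖U.mulVec g j‖ ^ p) ^ (1/p)
      ≤ μ ^ (2/q - 1) * (∑ k, ‖g k‖ ^ q) ^ (1/q) := by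
  have hq0 : (0:ℝ) < q := by linarith
  have hq11 : 1/q < 1 := by rw [div_lt_one hq0]; exact hq1
  have hq12 : 1/2 ≤ 1/q := by
    rw [div_le_div_iff₀ (by norm_num) hq0]; linarith
  have hp0 : (0:ℝ) < p := by
    have h1 : 0 < 1/p := by linarith
    exact (one_div_pos).mp h1
  have hp2 : (2:ℝ) ≤ p := by
    have h1 : 1/p ≤ 1/2 := by linarith
    rw [div_le_div_iff₀ hp0 (by norm_num)] at h1; linarith
  have hpq' : (p - 1) * q = p := by
    field_simp at hpq
    linarith
  set v := U.mulVec g with hv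
  set Sp := ∑ j, ‖v j‖ ^ p with hSpdef
  set Sq := ∑ k, ‖g k‖ ^ q with hSqdef
  have hSpnn : 0 ≤ Sp := Finset.sum_nonneg fun j _ => Real.rpow_nonneg (norm_nonneg _) _
  have hSqnn : 0 ≤ Sq := Finset.sum_nonneg fun k _ => Real.rpow_nonneg (norm_nonneg _) _
  rcases eq_or_lt_of_le hSpnn with hSp0 | hSp
  · rw [← hSp0, Real.zero_rpow (by positivity : (1:ℝ)/p ≠ 0)]
    positivity
  · have hSq : 0 < Sq := by
      rcases eq_or_lt_of_le hSqnn with h0 | h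
      · exfalso
        have hg : ∀ k, g k = 0 := by
          intro k
          have := (Finset.sum_eq_zero_iff_of_nonneg
            (fun k _ => Real.rpow_nonneg (norm_nonneg (g k)) q)).mp h0.symm k (mem_univ k)
          have habs0 : ‖g k‖ = 0 := by
            by_contra hne
            have : (0:ℝ) < ‖g k‖ := lt_of_le_of_ne (norm_nonneg _) (Ne.symm hne)
            exact absurd ‹‖g k‖ ^ q = 0› (ne_of_gt (Real.rpow_pos_of_pos this q))
          simpa using habs0
        have hv0 : v = 0 := by
          rw [hv, show g = 0 from funext hg, Matrix.mulVec_zero]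
        rw [hSpdef, hv0] at hSp
        simp [Real.zero_rpow (ne_of_gt hp0)] at hSp
      · exact h
    set θ := 2/q - 1 with hθ
    have hθ0 : 0 ≤ θ := by
      rw [hθ, sub_nonneg, le_div_iff₀ hq0]; linarith
    have hθ1 : θ ≤ 1 := by
      rw [hθ, sub_le_iff_le_add, div_le_iff₀ hq0]; linarith
    set s := q/2 with hs
    have hspos : 0 < s := by positivity
    have hs1 : s * (1 + θ) = 1 := by
      rw [hs, hθ]; field_simp; ring
    set h : Fin N → ℂ :=
      fun j => (starRingEnd ℂ) (v j) * ((‖v j‖ ^ (p - 2) : ℝ) : ℂ) with hh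
    have habs : ∀ j, ‖h j‖ = ‖v j‖ ^ (p-1) := by
      intro j
      by_cases hvj : v j = 0
      · simp [hh, hvj, Real.zero_rpow (show p - 1 ≠ 0 by intro hc; linarith)]
      · have hva : 0 < ‖v j‖ := by
          simpa [norm_pos_iff] using hvj
        rw [hh]
        simp only
        rw [norm_mul, Complex.norm_conj, Complex.norm_real, Real.norm_eq_abs,
          abs_of_nonneg (Real.rpow_nonneg (norm_nonneg _) _),
          show p - 1 = 1 + (p-2) by ring, Real.rpow_add hva, Real.rpow_one]
    have hhq : ∀ j, ‖h j‖ ^ q = ‖v j‖ ^ p := by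
      intro j
      rw [habs j, ← Real.rpow_mul (norm_nonneg _), hpq']
    have hSh : ∑ j, ‖h j‖ ^ q = Sp := by
      simp_rw [hhq, hSpdef]
    set Φ : ℂ → ℂ :=
      fun w => ∑ j, ∑ k, dilHY s (h j) w * U j k * dilHY s (g k) w with hΦ
    have hΦalt : ∀ w, Φ w
        = ∑ j, dilHY s (h j) w * (U.mulVec (fun k => dilHY s (g k) w)) j := by
      intro w
      rw [hΦ]
      refine Finset.sum_congr rfl fun j _ => ?_
      simp [Matrix.mulVec, dotProduct, Finset.mul_sum, mul_assoc]
    have hdiff : Differentiable ℂ Φ := by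
      rw [hΦ]
      apply Differentiable.fun_sum
      intro j _
      apply Differentiable.fun_sum
      intro k _
      exact ((dilHY_differentiable s (h j)).mul (differentiable_const _)).mul
        (dilHY_differentiable s (g k))
    -- squares of the dilations
    have hdilsq : ∀ (a : ℂ) (w : ℂ), w.re = 0 →
        ‖dilHY s a w‖ ^ (2:ℕ) = ‖a‖ ^ q := by
      intro a w hw
      rw [dilHY_abs hspos a (by rw [hw]), hw]
      rw [← Real.rpow_natCast (‖a‖ ^ (s * (1+0))) 2,
        ← Real.rpow_mul (norm_nonneg _)]
      norm_num [hs]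
    have hM0 : ∀ w ∈ Complex.re ⁻¹' {0}, ‖Φ w‖ ≤ Real.sqrt Sp * Real.sqrt Sq := by
      intro w hw
      have hw0 : w.re = 0 := hw
      set gw : Fin N → ℂ := fun k => dilHY s (g k) w with hgw
      set vw := U.mulVec gw with hvw
      have step1 : ‖Φ w‖ ≤ ∑ j, ‖dilHY s (h j) w‖ * ‖vw j‖ := by
        rw [hΦalt w]
        refine le_trans (norm_sum_le _ _) (le_of_eq ?_)
        exact Finset.sum_congr rfl fun j _ => norm_mul _ _
      have step2 : ∑ j, ‖dilHY s (h j) w‖ * ‖vw j‖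
          ≤ Real.sqrt (∑ j, ‖dilHY s (h j) w‖ ^ (2:ℕ))
            * Real.sqrt (∑ j, ‖vw j‖ ^ (2:ℕ)) := by
        have cs := Finset.sum_mul_sq_le_sq_mul_sq Finset.univ
          (fun j => ‖dilHY s (h j) w‖) (fun j => ‖vw j‖)
        have hnn : 0 ≤ ∑ j, ‖dilHY s (h j) w‖ * ‖vw j‖ :=
          Finset.sum_nonneg fun j _ => mul_nonneg (norm_nonneg _) (norm_nonneg _)
        calc ∑ j, ‖dilHY s (h j) w‖ * ‖vw j‖
            = Real.sqrt ((∑ j, ‖dilHY s (h j) w‖ * ‖vw j‖) ^ (2:ℕ)) :=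
              (Real.sqrt_sq hnn).symm
          _ ≤ Real.sqrt ((∑ j, ‖dilHY s (h j) w‖ ^ (2:ℕ))
                * ∑ j, ‖vw j‖ ^ (2:ℕ)) := Real.sqrt_le_sqrt cs
          _ = _ := Real.sqrt_mul (Finset.sum_nonneg fun j _ => sq_nonneg _) _
      have eq1 : ∑ j, ‖dilHY s (h j) w‖ ^ (2:ℕ) = Sp := by
        rw [← hSh]
        exact Finset.sum_congr rfl fun j _ => hdilsq (h j) w hw0
      have eq2 : ∑ j, ‖vw j‖ ^ (2:ℕ) = Sq := by
        rw [hvw, parsevalHY U hU gw, hSqdef]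
        exact Finset.sum_congr rfl fun k _ => hdilsq (g k) w hw0
      rw [eq1, eq2] at step2
      exact le_trans step1 step2
    have hdil1 : ∀ (a : ℂ) (w : ℂ), w.re = 1 →
        ‖dilHY s a w‖ = ‖a‖ ^ q := by
      intro a w hw
      rw [dilHY_abs hspos a (by rw [hw]; norm_num), hw]
      norm_num [hs]
    have hM1 : ∀ w ∈ Complex.re ⁻¹' {1}, ‖Φ w‖ ≤ μ * Sp * Sq := by
      intro w hw
      have hw1 : w.re = 1 := hw
      have step1 : ‖Φ w‖ ≤ ∑ j, ∑ k,
          ‖h j‖ ^ q * (μ * ‖g k‖ ^ q) := by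
        rw [hΦ]
        refine le_trans (norm_sum_le _ _) (Finset.sum_le_sum fun j _ => ?_)
        refine le_trans (norm_sum_le _ _) (Finset.sum_le_sum fun k _ => ?_)
        rw [norm_mul, norm_mul, hdil1 (h j) w hw1, hdil1 (g k) w hw1]
        rw [show ‖h j‖ ^ q * (μ * ‖g k‖ ^ q)
          = ‖h j‖ ^ q * μ * ‖g k‖ ^ q by ring]
        exact mul_le_mul_of_nonneg_right (mul_le_mul_of_nonneg_left (hμb j k)
          (Real.rpow_nonneg (norm_nonneg _) _))
          (Real.rpow_nonneg (norm_nonneg _) _)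
      have step2 : ∑ j, ∑ k, ‖h j‖ ^ q * (μ * ‖g k‖ ^ q)
          = μ * Sp * Sq := by
        simp_rw [← Finset.mul_sum, ← Finset.sum_mul, hSh, ← hSqdef]
        ring
      rw [step2] at step1
      exact step1
    have hBdd : BddAbove ((norm ∘ Φ) '' (Complex.HadamardThreeLines.verticalClosedStrip 0 1)) := by
      refine ⟨∑ j, ∑ k, max 1 (‖h j‖ ^ q) * μ * max 1 (‖g k‖ ^ q), ?_⟩
      rintro y ⟨w, hw, rfl⟩
      have hw' : w.re ∈ Set.Icc (0:ℝ) 1 := hw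
      have hdb : ∀ a : ℂ, ‖dilHY s a w‖ ≤ max 1 (‖a‖ ^ q) := by
        intro a
        rw [dilHY_abs hspos a hw'.1]
        have hexp0 : 0 ≤ s * (1 + w.re) := by nlinarith [hw'.1, hspos.le]
        by_cases h1 : ‖a‖ ≤ 1
        · exact le_trans (Real.rpow_le_one (norm_nonneg _) h1 hexp0) (le_max_left _ _)
        · push_neg at h1
          refine le_trans ?_ (le_max_right _ _)
          apply Real.rpow_le_rpow_of_exponent_le h1.le
          nlinarith [hw'.2, hspos.le, hs]
      simp only [Function.comp_apply]
      refine le_trans (norm_sum_le _ _) (Finset.sum_le_sum fun j _ => ?_)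
      refine le_trans (norm_sum_le _ _) (Finset.sum_le_sum fun k _ => ?_)
      rw [norm_mul, norm_mul]
      have t1 := hdb (h j)
      have t2 := hμb j k
      have t3 := hdb (g k)
      have n1 : (0:ℝ) ≤ ‖dilHY s (h j) w‖ := norm_nonneg _
      have n3 : (0:ℝ) ≤ ‖dilHY s (g k) w‖ := norm_nonneg _
      have nU : (0:ℝ) ≤ ‖U j k‖ := norm_nonneg _
      have m1 : (0:ℝ) ≤ max 1 (‖h j‖ ^ q) := le_trans zero_le_one (le_max_left _ _)
      nlinarith [mul_le_mul (mul_le_mul t1 t2 nU (le_trans n1 t1)) t3 n3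
        (mul_nonneg m1 (le_trans nU t2))]
    have hmem : (θ:ℂ) ∈ Complex.HadamardThreeLines.verticalClosedStrip 0 1 := by
      simp only [Complex.HadamardThreeLines.verticalClosedStrip, Set.mem_preimage,
        Complex.ofReal_re, Set.mem_Icc]
      exact ⟨hθ0, hθ1⟩
    have key := Complex.HadamardThreeLines.norm_le_interp_of_mem_verticalClosedStrip' (f := Φ) zero_lt_one hmem
      hdiff.diffContOnCl hBdd hM0 hM1
    have hΦθ : Φ (θ:ℂ) = (Sp:ℂ) := by
      have hdil : ∀ a : ℂ, dilHY s a (θ:ℂ) = a := fun a => dilHY_of_eq_one hs1 a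
      have hgθ : (fun k => dilHY s (g k) (θ:ℂ)) = g := funext fun k => hdil (g k)
      rw [hΦalt, hgθ]
      have hterm : ∀ j, dilHY s (h j) (θ:ℂ) * (U.mulVec g) j
          = ((‖v j‖ ^ p : ℝ) : ℂ) := by
        intro j
        rw [hdil (h j), ← hv]
        by_cases hvj : v j = 0
        · simp [hh, hvj, Real.zero_rpow (ne_of_gt hp0)]
        · have hva : 0 < ‖v j‖ := by
            simpa [norm_pos_iff] using hvj
          rw [hh]
          simp only
          rw [show (starRingEnd ℂ) (v j) * ((‖v j‖ ^ (p - 2) : ℝ) : ℂ) * v j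
            = (v j * (starRingEnd ℂ) (v j)) * ((‖v j‖ ^ (p - 2) : ℝ) : ℂ) by ring,
            Complex.mul_conj, ← Complex.sq_norm, ← Complex.ofReal_mul]
          exact congrArg _ (by rw [← Real.rpow_natCast (‖v j‖) 2,
            ← Real.rpow_add hva]; norm_num)
      rw [Finset.sum_congr rfl fun j _ => hterm j, hSpdef]
      push_cast
      rfl
    rw [hΦθ] at key
    simp only [Complex.ofReal_re] at key
    have hnrm : ‖(Sp:ℂ)‖ = Sp := by
      rw [Complex.norm_real, Real.norm_eq_abs, abs_of_nonneg hSpnn]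
    rw [hnrm] at key
    have hA : (1:ℝ)/2 * (1-θ) + θ = 1/q := by rw [hθ]; ring
    have e1 : (Real.sqrt Sp * Real.sqrt Sq) ^ (1-θ) * (μ*Sp*Sq)^θ
        = μ^θ * Sp^((1:ℝ)/q) * Sq^((1:ℝ)/q) := by
      calc (Real.sqrt Sp * Real.sqrt Sq) ^ (1-θ) * (μ*Sp*Sq)^θ
          = (Sp^((1:ℝ)/2) * Sq^((1:ℝ)/2))^(1-θ) * (μ*Sp*Sq)^θ := by
            rw [Real.sqrt_eq_rpow, Real.sqrt_eq_rpow]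
        _ = (Sp^((1:ℝ)/2*(1-θ)) * Sq^((1:ℝ)/2*(1-θ))) * (μ^θ * Sp^θ * Sq^θ) := by
            rw [Real.mul_rpow (Real.rpow_nonneg hSpnn _) (Real.rpow_nonneg hSqnn _),
              ← Real.rpow_mul hSpnn, ← Real.rpow_mul hSqnn,
              Real.mul_rpow (mul_nonneg hμpos.le hSpnn) hSqnn,
              Real.mul_rpow hμpos.le hSpnn]
        _ = μ^θ * (Sp^((1:ℝ)/2*(1-θ)) * Sp^θ) * (Sq^((1:ℝ)/2*(1-θ)) * Sq^θ) := by ring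
        _ = μ^θ * Sp^((1:ℝ)/2*(1-θ)+θ) * Sq^((1:ℝ)/2*(1-θ)+θ) := by
            rw [← Real.rpow_add hSp, ← Real.rpow_add hSq]
        _ = μ^θ * Sp^((1:ℝ)/q) * Sq^((1:ℝ)/q) := by rw [hA]
    rw [sub_zero, sub_zero, div_one, e1] at key
    have hsplit : Sp = Sp^((1:ℝ)/q) * Sp^((1:ℝ)/p) := by
      rw [← Real.rpow_add hSp, show (1:ℝ)/q + 1/p = 1 by linarith, Real.rpow_one]
    nth_rewrite 1 [hsplit] at key
    have key2 : Sp^((1:ℝ)/q) * Sp^((1:ℝ)/p) ≤ Sp^((1:ℝ)/q) * (μ^θ * Sq^((1:ℝ)/q)) := by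
      calc Sp^((1:ℝ)/q) * Sp^((1:ℝ)/p) ≤ μ^θ * Sp^((1:ℝ)/q) * Sq^((1:ℝ)/q) := key
        _ = Sp^((1:ℝ)/q) * (μ^θ * Sq^((1:ℝ)/q)) := by ring
    exact le_of_mul_le_mul_left key2 (Real.rpow_pos_of_pos hSp _)

lemma lpnormE_nonneg {ι : Type*} [Fintype ι] (p : ℝ≥0∞) (f : ι → ℂ) : 0 ≤ lpnormE p f := by
  unfold lpnormE
  split_ifs
  · exact Real.iSup_nonneg fun i => norm_nonneg _
  · exact Real.rpow_nonneg
      (Finset.sum_nonneg fun i _ => Real.rpow_nonneg (norm_nonneg _) _) _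

/-- Graph Hausdorff–Young inequality, converse direction. -/
theorem stmt5 {N : ℕ} (U : Matrix (Fin N) (Fin N) ℂ)
    (hU : U ∈ Matrix.unitaryGroup (Fin N) ℂ)
    (μ : ℝ) (hμ : μ = ⨆ q : Fin N × Fin N, ‖U q.1 q.2‖)
    (p q : ℝ≥0∞) (hpq : 1 / p + 1 / q = 1) (hp : 2 ≤ p)
    (f : Fin N → ℂ) :
    μ ^ (1 - 2 / q.toReal) * lpnormE p f ≤ lpnormE q (Uᴴ.mulVec f) := by
  have hp0 : p ≠ 0 := by
    intro h
    rw [h] at hp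
    exact absurd hp (by norm_num)
  have hq0 : q ≠ 0 := by
    intro h
    rw [h] at hpq
    simp [ENNReal.div_zero] at hpq
  have hqt : q ≠ ⊤ := by
    intro h
    rw [h, ENNReal.div_top, add_zero, one_div, ENNReal.inv_eq_one] at hpq
    rw [hpq] at hp
    exact absurd hp (by norm_num)
  by_cases hN : N = 0
  · subst hN
    have hfp : lpnormE p f = 0 := by
      unfold lpnormE
      split_ifs with htop
      · exact Real.iSup_of_isEmpty _
      · rw [show ∑ i, ‖f i‖ ^ p.toReal = 0 from Finset.sum_of_isEmpty _,
          Real.zero_rpow]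
        have : 0 < p.toReal := ENNReal.toReal_pos hp0 htop
        positivity
    rw [hfp, mul_zero]
    exact lpnormE_nonneg q _
  · have hN0 : 0 < N := Nat.pos_of_ne_zero hN
    have hμb : ∀ j k, ‖U j k‖ ≤ μ := by
      intro j k
      rw [hμ]
      exact le_ciSup (f := fun q : Fin N × Fin N => ‖U q.1 q.2‖)
        (Set.Finite.bddAbove (Set.finite_range _)) (⟨j, k⟩ : Fin N × Fin N)
    have hμpos : 0 < μ := by
      by_contra hc
      push_neg at hc
      have hz : ∀ j k, U j k = 0 := by
        intro j k
        have h1 := hμb j k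
        have h0 := norm_nonneg (U j k)
        have : ‖U j k‖ = 0 := le_antisymm (h1.trans hc) h0
        simpa using this
      have h1 := congrFun (congrFun hU.2 ⟨0, hN0⟩) ⟨0, hN0⟩
      rw [Matrix.mul_apply] at h1
      simp [hz, Matrix.one_apply_eq] at h1
    have hUUH : U * Uᴴ = 1 := by
      rw [← Matrix.star_eq_conjTranspose]
      exact hU.2
    have hfeq : U.mulVec (Uᴴ.mulVec f) = f := by
      rw [Matrix.mulVec_mulVec, hUUH, Matrix.one_mulVec]
    by_cases hpt : p = ⊤
    · have hq1 : q = 1 := by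
        rw [hpt, ENNReal.div_top, zero_add, one_div, ENNReal.inv_eq_one] at hpq
        exact hpq
      subst hq1
      rw [hpt]
      unfold lpnormE
      rw [if_pos rfl, if_neg (by norm_num : (1:ℝ≥0∞) ≠ ⊤)]
      simp only [ENNReal.toReal_one, Real.rpow_one, div_one, ne_eq, one_ne_zero,
        not_false_eq_true]
      rw [show (1:ℝ) - 2 = -1 by norm_num, Real.rpow_neg_one]
      have hb : ∀ i, ‖f i‖ ≤ μ * ∑ j, ‖Uᴴ.mulVec f j‖ := by
        intro i
        conv_lhs => rw [← hfeq]
        calc ‖U.mulVec (Uᴴ.mulVec f) i‖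
            ≤ ∑ k, ‖U i k‖ * ‖Uᴴ.mulVec f k‖ := by
              rw [Matrix.mulVec, dotProduct]
              refine le_trans (norm_sum_le _ _) (le_of_eq ?_)
              exact Finset.sum_congr rfl fun k _ => norm_mul _ _
          _ ≤ ∑ k, μ * ‖Uᴴ.mulVec f k‖ :=
              Finset.sum_le_sum fun k _ =>
                mul_le_mul_of_nonneg_right (hμb i k) (norm_nonneg _)
          _ = μ * ∑ j, ‖Uᴴ.mulVec f j‖ := (Finset.mul_sum _ _ _).symm
      have : Nonempty (Fin N) := ⟨⟨0, hN0⟩⟩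
      have hsup := ciSup_le hb
      calc μ⁻¹ * ⨆ i, ‖f i‖
          ≤ μ⁻¹ * (μ * ∑ j, ‖Uᴴ.mulVec f j‖) :=
            mul_le_mul_of_nonneg_left hsup (inv_nonneg.mpr hμpos.le)
        _ = ∑ j, ‖Uᴴ.mulVec f j‖ := by
            field_simp
    · -- finite exponents
      have hpr2 : (2:ℝ) ≤ p.toReal := by
        have h2 := (ENNReal.toReal_le_toReal (by norm_num : (2:ℝ≥0∞) ≠ ⊤) hpt).mpr hp
        simpa using h2
      have hpq_r : 1/p.toReal + 1/q.toReal = 1 := by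
        have h := congrArg ENNReal.toReal hpq
        rw [ENNReal.toReal_add (by rw [one_div]; exact ENNReal.inv_ne_top.mpr hp0)
          (by rw [one_div]; exact ENNReal.inv_ne_top.mpr hq0)] at h
        simpa [one_div, ENNReal.toReal_inv] using h
      have hqr_pos : 0 < q.toReal := ENNReal.toReal_pos hq0 hqt
      have hpr_pos : (0:ℝ) < p.toReal := by linarith
      have h1p : 0 < 1/p.toReal := by positivity
      have hqr1 : 1 < q.toReal := by
        have h2 : 1/q.toReal < 1 := by linarith
        rwa [div_lt_one hqr_pos] at h2
      have hqr2 : q.toReal ≤ 2 := by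
        have h1 : 1/p.toReal ≤ 1/2 := by
          rw [div_le_div_iff₀ hpr_pos (by norm_num)]; linarith
        have h2 : 1/2 ≤ 1/q.toReal := by linarith
        rw [div_le_div_iff₀ (by norm_num) hqr_pos] at h2
        linarith
      have main := hy_forward U hU μ hμpos hμb p.toReal q.toReal hqr1 hqr2 hpq_r
        (Uᴴ.mulVec f)
      rw [hfeq] at main
      unfold lpnormE
      rw [if_neg hpt, if_neg hqt]
      calc μ ^ (1 - 2/q.toReal) * (∑ j, ‖f j‖ ^ p.toReal) ^ (1/p.toReal)
          ≤ μ ^ (1 - 2/q.toReal) * (μ ^ (2/q.toReal - 1)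
              * (∑ k, ‖Uᴴ.mulVec f k‖ ^ q.toReal) ^ (1/q.toReal)) :=
            mul_le_mul_of_nonneg_left main (Real.rpow_nonneg hμpos.le _)
        _ = (∑ k, ‖Uᴴ.mulVec f k‖ ^ q.toReal) ^ (1/q.toReal) := by
            rw [← mul_assoc, ← Real.rpow_add hμpos,
              show (1 - 2/q.toReal) + (2/q.toReal - 1) = 0 by ring,
              Real.rpow_zero, one_mul]
end

section
/- Let f, g be discrete signals of period N, with DFT f̂[k] = (1/√N) Σ_{n=0}^{N-1} f[n] e^{-2πikn/N} and discrete windowed Fourier transform V_g f[u,k] = Σ_{n=0}^{N-1} f[n] conj(g[n-u]) e^{-2πikn/N}. Then for 2 ≤ p < ∞, (Σ_{u,k} |V_g f[u,k]|^p)^{1/p} ≤ N^{1/p} ‖f‖_2 ‖g‖_2, and for 1 ≤ p ≤ 2, (Σ_{u,k} |V_g f[u,k]|^p)^{1/p} ≥ N^{1/p} ‖f‖_2 ‖g‖_2. -/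
open Finset

open ZMod AddChar in
private lemma conj_stdAddChar' {N : ℕ} [NeZero N] (x : ZMod N) :
    (starRingEnd ℂ) (stdAddChar x) = stdAddChar (-x) := by
  rw [stdAddChar_apply, stdAddChar_apply, map_neg_eq_inv, Circle.coe_inv_eq_conj]

open ZMod AddChar in
private lemma exp_eq_stdAddChar' {N : ℕ} [NeZero N] (k n : ZMod N) :
    Complex.exp (-(2 * (Real.pi : ℂ) * Complex.I * ((k.val : ℂ) * (n.val : ℂ)) / (N : ℂ)))
      = stdAddChar (-(n * k)) := by
  have h1 : ((-((k.val : ℤ) * (n.val : ℤ)) : ℤ) : ZMod N) = -(n * k) := by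
    push_cast
    rw [ZMod.natCast_val, ZMod.natCast_val, ZMod.cast_id, ZMod.cast_id]
    ring
  rw [← h1, stdAddChar_coe]
  congr 1
  push_cast
  ring

open ZMod AddChar in
private lemma complex_parseval' {N : ℕ} [NeZero N] (h : ZMod N → ℂ) :
    ∑ k : ZMod N, ZMod.dft h k * (starRingEnd ℂ) (ZMod.dft h k)
      = (N : ℂ) * ∑ n : ZMod N, h n * (starRingEnd ℂ) (h n) := by
  have key : ∀ n m : ZMod N,
      ∑ k : ZMod N, stdAddChar (-(n * k)) * (starRingEnd ℂ) (stdAddChar (-(m * k)))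
        = if m - n = 0 then (N : ℂ) else 0 := by
    intro n m
    have e : ∀ k : ZMod N, stdAddChar (-(n * k)) * (starRingEnd ℂ) (stdAddChar (-(m * k)))
        = stdAddChar (k * (m - n)) := by
      intro k
      rw [conj_stdAddChar', neg_neg, ← map_add_eq_mul]
      congr 1
      ring
    rw [Finset.sum_congr rfl fun k _ => e k]
    simpa [ZMod.card] using AddChar.sum_mulShift (m - n) (ZMod.isPrimitive_stdAddChar N)
  calc ∑ k : ZMod N, ZMod.dft h k * (starRingEnd ℂ) (ZMod.dft h k)
      = ∑ k : ZMod N, ∑ n : ZMod N, ∑ m : ZMod N,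
          (stdAddChar (-(n * k)) * (starRingEnd ℂ) (stdAddChar (-(m * k)))) *
            (h n * (starRingEnd ℂ) (h m)) := by
        refine Finset.sum_congr rfl fun k _ => ?_
        rw [ZMod.dft_apply, map_sum, Finset.sum_mul_sum]
        refine Finset.sum_congr rfl fun n _ => Finset.sum_congr rfl fun m _ => ?_
        simp only [smul_eq_mul, map_mul]
        ring
    _ = ∑ n : ZMod N, ∑ m : ZMod N,
          (∑ k : ZMod N, stdAddChar (-(n * k)) * (starRingEnd ℂ) (stdAddChar (-(m * k)))) *
            (h n * (starRingEnd ℂ) (h m)) := by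
        rw [Finset.sum_comm]
        refine Finset.sum_congr rfl fun n _ => ?_
        rw [Finset.sum_comm]
        refine Finset.sum_congr rfl fun m _ => ?_
        rw [Finset.sum_mul]
    _ = ∑ n : ZMod N, ∑ m : ZMod N,
          (if m - n = 0 then (N : ℂ) else 0) * (h n * (starRingEnd ℂ) (h m)) := by
        simp only [key]
    _ = (N : ℂ) * ∑ n : ZMod N, h n * (starRingEnd ℂ) (h n) := by
        simp [sub_eq_zero, ite_mul, Finset.mul_sum]

private lemma rpow_two_eq_pow {x : ℝ} : x ^ (2 : ℝ) = x ^ (2 : ℕ) := by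
  rw [show (2 : ℝ) = ((2 : ℕ) : ℝ) by norm_num, Real.rpow_natCast]

private lemma abs_parseval' {N : ℕ} [NeZero N] (h : ZMod N → ℂ) :
    ∑ k : ZMod N, ‖ZMod.dft h k‖ ^ (2 : ℝ)
      = (N : ℝ) * ∑ n : ZMod N, ‖h n‖ ^ (2 : ℝ) := by
  simp only [rpow_two_eq_pow, Complex.sq_norm]
  have := complex_parseval' h
  simp only [Complex.mul_conj] at this
  exact_mod_cast this

private lemma real_juggle {ι : Type*} [Fintype ι] (p : ℝ) (hp : 1 ≤ p) (v : ι → ℝ)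
    (hv : ∀ i, 0 ≤ v i) (M C : ℝ) (hM : 0 ≤ M) (hC : 0 ≤ C)
    (hpar : ∑ i, v i ^ (2 : ℝ) = C * M ^ (2 : ℝ))
    (hcs : ∀ i, v i ≤ M) :
    (2 ≤ p → (∑ i, v i ^ p) ^ (1 / p) ≤ C ^ (1 / p) * M) ∧
      (p ≤ 2 → C ^ (1 / p) * M ≤ (∑ i, v i ^ p) ^ (1 / p)) := by
  have hp0 : 0 < p := lt_of_lt_of_le one_pos hp
  have hsum_nonneg : 0 ≤ ∑ i, v i ^ p :=
    Finset.sum_nonneg fun i _ => Real.rpow_nonneg (hv i) p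
  rcases eq_or_lt_of_le hM with hM0 | hMpos
  · -- M = 0, all v i = 0
    have hvz : ∀ i, v i = 0 := fun i => le_antisymm ((hM0 ▸ hcs i : v i ≤ 0)) (hv i)
    have hz : ∀ q : ℝ, q ≠ 0 → (∑ i, v i ^ q) = 0 := by
      intro q hq
      refine Finset.sum_eq_zero fun i _ => ?_
      rw [hvz i, Real.zero_rpow hq]
    rw [hz p hp0.ne']
    rw [Real.zero_rpow (by positivity : (1:ℝ)/p ≠ 0), ← hM0, mul_zero]
    exact ⟨fun _ => le_refl 0, fun _ => le_refl 0⟩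
  · constructor
    · intro h2p
      have h1 : ∑ i, v i ^ p ≤ C * M ^ p := by
        have step : ∀ i, v i ^ p ≤ M ^ (p - 2) * v i ^ (2 : ℝ) := by
          intro i
          rcases eq_or_lt_of_le (hv i) with hvi | hvi
          · rw [← hvi, Real.zero_rpow hp0.ne', Real.zero_rpow two_ne_zero, mul_zero]
          · have : v i ^ p = v i ^ (p - 2) * v i ^ (2 : ℝ) := by
              rw [← Real.rpow_add hvi]; ring_nf
            rw [this]
            exact mul_le_mul_of_nonneg_right
              (Real.rpow_le_rpow (hv i) (hcs i) (by linarith))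
              (Real.rpow_nonneg (hv i) 2)
        calc ∑ i, v i ^ p ≤ ∑ i, M ^ (p - 2) * v i ^ (2 : ℝ) :=
              Finset.sum_le_sum fun i _ => step i
          _ = M ^ (p - 2) * ∑ i, v i ^ (2 : ℝ) := by rw [Finset.mul_sum]
          _ = C * M ^ p := by
              rw [hpar, ← mul_assoc, mul_comm (M ^ (p-2)) C, mul_assoc,
                ← Real.rpow_add hMpos]
              ring_nf
      calc (∑ i, v i ^ p) ^ (1 / p) ≤ (C * M ^ p) ^ (1 / p) :=
            Real.rpow_le_rpow hsum_nonneg h1 (by positivity)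
        _ = C ^ (1 / p) * M := by
            rw [Real.mul_rpow hC (Real.rpow_nonneg hM p), ← Real.rpow_mul hM,
              mul_one_div, div_self hp0.ne', Real.rpow_one]
    · intro hp2
      have h1 : C * M ^ p ≤ ∑ i, v i ^ p := by
        have step : ∀ i, v i ^ (2 : ℝ) ≤ M ^ (2 - p) * v i ^ p := by
          intro i
          rcases eq_or_lt_of_le (hv i) with hvi | hvi
          · rw [← hvi, Real.zero_rpow hp0.ne', Real.zero_rpow two_ne_zero, mul_zero]
          · have : v i ^ (2 : ℝ) = v i ^ (2 - p) * v i ^ p := by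
              rw [← Real.rpow_add hvi]; ring_nf
            rw [this]
            exact mul_le_mul_of_nonneg_right
              (Real.rpow_le_rpow (hv i) (hcs i) (by linarith))
              (Real.rpow_nonneg (hv i) p)
        have h2 : C * M ^ (2 : ℝ) ≤ M ^ (2 - p) * ∑ i, v i ^ p := by
          rw [← hpar, Finset.mul_sum]
          exact Finset.sum_le_sum fun i _ => step i
        have hMpow : (0 : ℝ) < M ^ (2 - p) := Real.rpow_pos_of_pos hMpos _
        rw [show C * M ^ (2:ℝ) = M ^ (2 - p) * (C * M ^ p) by
              have hh : M ^ (2 - p) * M ^ p = M ^ (2:ℝ) := by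
                rw [← Real.rpow_add hMpos]; norm_num
              linear_combination (-C) * hh] at h2
        exact le_of_mul_le_mul_left h2 hMpow
      calc C ^ (1 / p) * M = (C * M ^ p) ^ (1 / p) := by
            rw [Real.mul_rpow hC (Real.rpow_nonneg hM p), ← Real.rpow_mul hM,
              mul_one_div, div_self hp0.ne', Real.rpow_one]
        _ ≤ (∑ i, v i ^ p) ^ (1 / p) :=
            Real.rpow_le_rpow (by positivity) h1 (by positivity)

/-- Discrete periodic version of Lieb's uncertainty principle for the discrete
windowed Fourier transform. -/
theorem stmt11 {N : ℕ} [NeZero N] (f g : ZMod N → ℂ) (p : ℝ) (hp : 1 ≤ p)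
    (V : ZMod N × ZMod N → ℂ)
    (hV : ∀ u k : ZMod N, V (u, k) =
      ∑ n : ZMod N, f n * (starRingEnd ℂ) (g (n - u)) *
        Complex.exp (-(2 * (Real.pi : ℂ) * Complex.I * ((k.val : ℂ) * (n.val : ℂ)) / (N : ℂ)))) :
    (2 ≤ p → lpnorm p V ≤ (N : ℝ) ^ (1 / p) * lpnorm 2 f * lpnorm 2 g) ∧
      (p ≤ 2 → (N : ℝ) ^ (1 / p) * lpnorm 2 f * lpnorm 2 g ≤ lpnorm p V) := by
  classical
  set F : ℝ := ∑ n : ZMod N, ‖f n‖ ^ (2 : ℝ) with hFdef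
  set G : ℝ := ∑ n : ZMod N, ‖g n‖ ^ (2 : ℝ) with hGdef
  have hF0 : 0 ≤ F := Finset.sum_nonneg fun i _ => Real.rpow_nonneg (norm_nonneg _) _
  have hG0 : 0 ≤ G := Finset.sum_nonneg fun i _ => Real.rpow_nonneg (norm_nonneg _) _
  set M : ℝ := F ^ ((1:ℝ)/2) * G ^ ((1:ℝ)/2) with hMdef
  have hM0 : 0 ≤ M := mul_nonneg (Real.rpow_nonneg hF0 _) (Real.rpow_nonneg hG0 _)
  have hMsq : M ^ (2 : ℝ) = F * G := by
    rw [hMdef, Real.mul_rpow (Real.rpow_nonneg hF0 _) (Real.rpow_nonneg hG0 _),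
      ← Real.rpow_mul hF0, ← Real.rpow_mul hG0]
    norm_num
  -- rewrite V in terms of the DFT
  have hVd : ∀ u k : ZMod N,
      V (u, k) = ZMod.dft (fun n => f n * (starRingEnd ℂ) (g (n - u))) k := by
    intro u k
    rw [hV, ZMod.dft_apply]
    refine Finset.sum_congr rfl fun n _ => ?_
    rw [smul_eq_mul, exp_eq_stdAddChar']
    ring
  -- translation invariance of the window's energy
  have htrans2 : ∀ u : ZMod N,
      ∑ n : ZMod N, ‖g (n - u)‖ ^ (2 : ℝ) = G := by
    intro u
    exact Fintype.sum_equiv (Equiv.subRight u)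
      (fun n => ‖g (n - u)‖ ^ (2 : ℝ))
      (fun x => ‖g x‖ ^ (2 : ℝ)) (fun n => rfl)
  have htrans : ∀ n : ZMod N,
      ∑ u : ZMod N, ‖g (n - u)‖ ^ (2 : ℝ) = G := by
    intro n
    exact Fintype.sum_equiv (Equiv.subLeft n)
      (fun u => ‖g (n - u)‖ ^ (2 : ℝ))
      (fun x => ‖g x‖ ^ (2 : ℝ)) (fun u => rfl)
  -- Parseval identity for V
  have hpar : ∑ x : ZMod N × ZMod N, ‖V x‖ ^ (2 : ℝ) = (N : ℝ) * (F * G) := by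
    rw [Fintype.sum_prod_type]
    have inner : ∀ u : ZMod N,
        ∑ k : ZMod N, ‖V (u, k)‖ ^ (2 : ℝ)
          = (N : ℝ) * ∑ n : ZMod N,
              ‖f n‖ ^ (2 : ℝ) * ‖g (n - u)‖ ^ (2 : ℝ) := by
      intro u
      have := abs_parseval' (fun n => f n * (starRingEnd ℂ) (g (n - u)))
      calc ∑ k : ZMod N, ‖V (u, k)‖ ^ (2 : ℝ)
          = ∑ k : ZMod N, ‖ZMod.dft (fun n => f n * (starRingEnd ℂ) (g (n - u))) k‖ ^ (2 : ℝ) := by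
            refine Finset.sum_congr rfl fun k _ => ?_
            rw [hVd]
        _ = (N : ℝ) * ∑ n : ZMod N,
              ‖f n‖ ^ (2 : ℝ) * ‖g (n - u)‖ ^ (2 : ℝ) := by
            rw [this]
            congr 1
            refine Finset.sum_congr rfl fun n _ => ?_
            rw [norm_mul, Complex.norm_conj,
              Real.mul_rpow (norm_nonneg _) (norm_nonneg _)]
    calc ∑ u : ZMod N, ∑ k : ZMod N, ‖V (u, k)‖ ^ (2 : ℝ)
        = ∑ u : ZMod N, (N : ℝ) * ∑ n : ZMod N,
            ‖f n‖ ^ (2 : ℝ) * ‖g (n - u)‖ ^ (2 : ℝ) :=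
          Finset.sum_congr rfl fun u _ => inner u
      _ = (N : ℝ) * ∑ u : ZMod N, ∑ n : ZMod N,
            ‖f n‖ ^ (2 : ℝ) * ‖g (n - u)‖ ^ (2 : ℝ) := by
          rw [Finset.mul_sum]
      _ = (N : ℝ) * ∑ n : ZMod N, ‖f n‖ ^ (2 : ℝ) *
            ∑ u : ZMod N, ‖g (n - u)‖ ^ (2 : ℝ) := by
          rw [Finset.sum_comm]
          congr 1
          exact Finset.sum_congr rfl fun n _ => by rw [Finset.mul_sum]
      _ = (N : ℝ) * ∑ n : ZMod N, ‖f n‖ ^ (2 : ℝ) * G := by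
          congr 1
          exact Finset.sum_congr rfl fun n _ => by rw [htrans n]
      _ = (N : ℝ) * (F * G) := by rw [← Finset.sum_mul]
  -- pointwise Cauchy-Schwarz bound
  have hcs : ∀ x : ZMod N × ZMod N, ‖V x‖ ≤ M := by
    intro ⟨u, k⟩
    have step1 : ‖V (u, k)‖ ≤
        ∑ n : ZMod N, ‖f n‖ * ‖g (n - u)‖ := by
      rw [hVd]
      refine (norm_sum_le _ _).trans_eq ?_
      refine Finset.sum_congr rfl fun n _ => ?_
      rw [smul_eq_mul, norm_mul, norm_mul, ZMod.stdAddChar_apply, Circle.norm_coe,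
        Complex.norm_conj, one_mul]
    have step2 : (∑ n : ZMod N, ‖f n‖ * ‖g (n - u)‖) ^ (2:ℕ)
        ≤ F * G := by
      have := Finset.sum_mul_sq_le_sq_mul_sq Finset.univ
        (fun n => ‖f n‖) (fun n => ‖g (n - u)‖)
      calc (∑ n : ZMod N, ‖f n‖ * ‖g (n - u)‖) ^ (2:ℕ)
          ≤ (∑ n : ZMod N, ‖f n‖ ^ (2:ℕ)) *
            ∑ n : ZMod N, ‖g (n - u)‖ ^ (2:ℕ) := this
        _ = F * G := by
            simp only [← rpow_two_eq_pow]
            rw [htrans2 u]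
    have hnn : 0 ≤ ∑ n : ZMod N, ‖f n‖ * ‖g (n - u)‖ :=
      Finset.sum_nonneg fun n _ => mul_nonneg (norm_nonneg _) (norm_nonneg _)
    have : ∑ n : ZMod N, ‖f n‖ * ‖g (n - u)‖ ≤ M := by
      have h1 := Real.sqrt_le_sqrt step2
      rwa [Real.sqrt_sq hnn, show Real.sqrt (F * G) = M by
        rw [hMdef, Real.sqrt_eq_rpow, Real.mul_rpow hF0 hG0]] at h1
    exact step1.trans this
  -- apply the juggling lemma
  have := real_juggle p hp (fun x => ‖V x‖) (fun x => norm_nonneg _)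
    M (N : ℝ) hM0 (Nat.cast_nonneg N) (by rw [hMsq]; exact hpar) hcs
  constructor
  · intro h2p
    have := this.1 h2p
    rw [mul_assoc]
    exact this
  · intro hp2
    have := this.2 hp2
    rw [mul_assoc]
    exact this
end
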